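/- arXiv:0911.1393 — 11 statements merged into one kernel-verified Lean document; each statement's English description precedes it below -/
import Mathlib

section
/- Let G = (V, E) be a simple undirected graph with vertices V = {1,…,n}. The color encoding C_G, a set of 3n + |E| homogeneous quadratic polynomials in the 2n+1 indeterminates x_1,…,x_n, y_1,…,y_n, z, has a common nonzero complex solution (x_1,…,x_n,y_1,…,y_n,z) ∈ ℂ^{2n+1} \ {0} if and only if G is 3-colorable. -/
noncomputable def zeta3 : ℂ := ⟨-1/2, Real.sqrt 3 / 2⟩

lemma zeta3_def : zeta3 = -1/2 + (Real.sqrt 3 / 2 : ℝ) * Complex.I := by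
  apply Complex.ext <;> simp [zeta3]

lemma zeta3_sum : zeta3 ^ 2 + zeta3 + 1 = 0 := by
  have h3 : ((Real.sqrt 3 : ℝ) : ℂ) ^ 2 = 3 := by
    norm_cast
    exact Real.sq_sqrt (by norm_num)
  rw [zeta3_def]
  push_cast
  linear_combination (Complex.I ^ 2 / 4) * h3 + (3/4 : ℂ) * Complex.I_sq

lemma zeta3_cube : zeta3 ^ 3 = 1 := by
  linear_combination (zeta3 - 1) * zeta3_sum

lemma zeta3_im : zeta3.im = Real.sqrt 3 / 2 := rfl

lemma sqrt3_pos : (0:ℝ) < Real.sqrt 3 / 2 := by positivity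

lemma zeta3_ne_one : zeta3 ≠ 1 := by
  intro h
  have h2 := congrArg Complex.im h
  rw [zeta3_im, Complex.one_im] at h2
  exact sqrt3_pos.ne' h2

lemma zeta3_ne_neg_one : zeta3 ≠ -1 := by
  intro h
  have h2 := congrArg Complex.im h
  simp [zeta3_im] at h2

lemma zeta3_sq_im : (zeta3 ^ 2).im = -(Real.sqrt 3 / 2) := by
  have h : zeta3 ^ 2 = -1 - zeta3 := by linear_combination zeta3_sum
  rw [h]
  simp [zeta3_im]

lemma zeta3_sq_ne_one : zeta3 ^ 2 ≠ 1 := by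
  intro h
  have h2 := congrArg Complex.im h
  rw [zeta3_sq_im, Complex.one_im] at h2
  exact sqrt3_pos.ne (by linarith)

lemma zeta3_sq_ne_zeta3 : zeta3 ^ 2 ≠ zeta3 := by
  intro h
  have := congrArg Complex.im h
  rw [zeta3_sq_im, zeta3_im] at this
  linarith [sqrt3_pos]

lemma cube_roots (c : ℂ) (h : c ^ 3 = 1) : c = 1 ∨ c = zeta3 ∨ c = zeta3 ^ 2 := by
  have h0 : (c - 1) * (c - zeta3) * (c - zeta3 ^ 2) = 0 := by
    linear_combination h + (-c^2 + zeta3 * c - (zeta3 - 1)) * zeta3_sum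
  rcases mul_eq_zero.mp h0 with h1 | h1
  · rcases mul_eq_zero.mp h1 with h2 | h2
    · exact Or.inl (sub_eq_zero.mp h2)
    · exact Or.inr (Or.inl (sub_eq_zero.mp h2))
  · exact Or.inr (Or.inr (sub_eq_zero.mp h1))

/-- The color encoding `C_G` of a graph `G` has a common nonzero
complex solution iff `G` is 3-colorable. -/
theorem stmt_2 (n : ℕ) (G : SimpleGraph (Fin n)) :
    (∃ (x y : Fin n → ℂ) (z : ℂ),
      ¬(x = 0 ∧ y = 0 ∧ z = 0) ∧
      (∀ i, x i * y i - z ^ 2 = 0) ∧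
      (∀ i, y i * z - x i ^ 2 = 0) ∧
      (∀ i, x i * z - y i ^ 2 = 0) ∧
      (∀ i j, G.Adj i j → x i ^ 2 + x i * x j + x j ^ 2 = 0)) ↔
    G.Colorable 3 := by
  constructor
  · rintro ⟨x, y, z, hnz, h1, h2, h3, h4⟩
    -- z ≠ 0
    have hz : z ≠ 0 := by
      intro hz0
      apply hnz
      refine ⟨funext fun i => ?_, funext fun i => ?_, hz0⟩
      · have := h2 i
        rw [hz0] at this
        have : x i ^ 2 = 0 := by linear_combination -this
        exact pow_eq_zero_iff (by norm_num) |>.mp this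
      · have := h3 i
        rw [hz0] at this
        have : y i ^ 2 = 0 := by linear_combination -this
        exact pow_eq_zero_iff (by norm_num) |>.mp this
    -- x i ≠ 0
    have hx : ∀ i, x i ≠ 0 := by
      intro i hxi
      have hyi : y i = 0 := by
        have := h2 i
        rw [hxi] at this
        have hyz : y i * z = 0 := by linear_combination this
        exact (mul_eq_zero.mp hyz).resolve_right hz
      have := h1 i
      rw [hxi, hyi] at this
      have hz2 : z ^ 2 = 0 := by linear_combination -this
      exact hz (pow_eq_zero_iff (by norm_num) |>.mp hz2)
    -- cube relation
    have hcube : ∀ i, (x i / z) ^ 3 = 1 := by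
      intro i
      have key : x i ^ 3 = z ^ 3 := by
        linear_combination z * h1 i - x i * h2 i
      field_simp
      exact key
    -- adjacent vertices get distinct normalized values
    have hdist : ∀ i j, G.Adj i j → x i / z ≠ x j / z := by
      intro i j hadj heq
      have hxeq : x i = x j := by
        field_simp at heq
        exact heq
      have := h4 i j hadj
      rw [hxeq] at this
      have h3x : (3:ℂ) * x j ^ 2 = 0 := by linear_combination this
      have : x j ^ 2 = 0 := by
        have h30 : (3:ℂ) ≠ 0 := by norm_num
        exact (mul_eq_zero.mp h3x).resolve_left h30
      exact hx j (pow_eq_zero_iff (by norm_num) |>.mp this)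
    -- build coloring
    classical
    let f : ℂ → Fin 3 := fun c => if c = 1 then 0 else if c = zeta3 then 1 else 2
    have hvalid : ∀ {i j : Fin n}, G.Adj i j → f (x i / z) ≠ f (x j / z) := by
      intro i j hadj
      have hne := hdist i j hadj
      rcases cube_roots _ (hcube i) with hi | hi | hi <;>
        rcases cube_roots _ (hcube j) with hj | hj | hj <;>
        simp_all [f, zeta3_ne_one, zeta3_sq_ne_one, zeta3_sq_ne_zeta3, zeta3_ne_neg_one]
    have C : G.Coloring (Fin 3) := SimpleGraph.Coloring.mk (fun i => f (x i / z)) hvalid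
    simpa using C.colorable
  · rintro ⟨C⟩
    refine ⟨fun i => zeta3 ^ (C i : ℕ), fun i => (zeta3 ^ (C i : ℕ)) ^ 2, 1, ?_, ?_, ?_, ?_, ?_⟩
    · rintro ⟨-, -, h⟩
      exact one_ne_zero h
    · intro i
      have : (zeta3 ^ (C i : ℕ)) ^ 3 = 1 := by
        rw [← pow_mul, mul_comm, pow_mul, zeta3_cube, one_pow]
      linear_combination this
    · intro i; ring
    · intro i
      have h3 : (zeta3 ^ (C i : ℕ)) ^ 3 = 1 := by
        rw [← pow_mul, mul_comm, pow_mul, zeta3_cube, one_pow]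
      linear_combination (-(zeta3 ^ (C i : ℕ))) * h3
    · intro i j hadj
      have hne : (C i : Fin 3) ≠ C j := C.valid hadj
      have hxne : zeta3 ^ (C i : ℕ) ≠ zeta3 ^ (C j : ℕ) := by
        have ha := C i
        revert hne
        generalize C i = a
        generalize C j = b
        intro hne
        fin_cases a <;> fin_cases b <;>
          simp_all [zeta3_ne_one, zeta3_sq_ne_one, zeta3_sq_ne_zeta3, zeta3_ne_neg_one,
            zeta3_sq_ne_zeta3.symm, zeta3_ne_one.symm, zeta3_sq_ne_one.symm]
      have h3i : (zeta3 ^ (C i : ℕ)) ^ 3 = 1 := by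
        rw [← pow_mul, mul_comm, pow_mul, zeta3_cube, one_pow]
      have h3j : (zeta3 ^ (C j : ℕ)) ^ 3 = 1 := by
        rw [← pow_mul, mul_comm, pow_mul, zeta3_cube, one_pow]
      have h0 : (zeta3 ^ (C i : ℕ) - zeta3 ^ (C j : ℕ)) *
          ((zeta3 ^ (C i : ℕ)) ^ 2 + zeta3 ^ (C i : ℕ) * zeta3 ^ (C j : ℕ) + (zeta3 ^ (C j : ℕ)) ^ 2) = 0 := by
        linear_combination h3i - h3j
      exact (mul_eq_zero.mp h0).resolve_left (sub_ne_zero.mpr hxne)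
end

section
/- Let G = (V, E) be a simple undirected graph with vertices V = {1,…,n}. Consider the modified color encoding consisting of the 3n polynomials x_i y_i − z², y_i z − x_i², x_i z − y_i² (i = 1,…,n) together with the n quadratics p_i(x) := Σ_{{i,j} ∈ E} (x_i² + x_i x_j + x_j²) for i = 1,…,n. This system of 4n homogeneous quadratic polynomials in x_1,…,x_n, y_1,…,y_n, z has a common nonzero complex solution in ℂ^{2n+1} \ {0} if and only if G is 3-colorable. -/
/-- The modified color encoding (with the edge equations replaced by
the `n` quadratics `p_i(x) = ∑_{{i,j} ∈ E} (x_i² + x_i x_j + x_j²)`) has a common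
nonzero complex solution iff `G` is 3-colorable. -/
theorem stmt_3 (n : ℕ) (G : SimpleGraph (Fin n)) [DecidableRel G.Adj] :
    (∃ (x y : Fin n → ℂ) (z : ℂ),
      ¬(x = 0 ∧ y = 0 ∧ z = 0) ∧
      (∀ i, x i * y i - z ^ 2 = 0) ∧
      (∀ i, y i * z - x i ^ 2 = 0) ∧
      (∀ i, x i * z - y i ^ 2 = 0) ∧
      (∀ i, ∑ j ∈ G.neighborFinset i, (x i ^ 2 + x i * x j + x j ^ 2) = 0)) ↔
    G.Colorable 3 := by
  obtain ⟨ω, hω⟩ : ∃ ω : ℂ, ω ^ 2 + ω + 1 = 0 := by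
    refine ⟨(-1 + (Real.sqrt 3 : ℂ) * Complex.I) / 2, ?_⟩
    have h3 : ((Real.sqrt 3 : ℝ) : ℂ) ^ 2 = 3 := by
      norm_cast
      rw [Real.sq_sqrt] <;> norm_num
    have hI := Complex.I_sq
    linear_combination (Complex.I ^ 2 / 4) * h3 + (3 / 4 : ℂ) * hI
  have hω0 : ω ≠ 0 := by rintro rfl; simp at hω
  have hω3 : ω ^ 3 = 1 := by linear_combination (ω - 1) * hω
  have hω1 : ω ≠ 1 := by rintro rfl; norm_num at hω
  have hω21 : ω ^ 2 ≠ 1 := by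
    intro h
    exact hω1 (by linear_combination hω3 - ω * h)
  have hωω2 : ω ≠ ω ^ 2 := by
    intro h
    exact hω21 (by linear_combination hω3 + ω * h)
  have hroot : ∀ t c : ℂ, t ^ 3 = c ^ 3 → t = c ∨ t = ω * c ∨ t = ω ^ 2 * c := by
    intro t c ht
    have h0 : (t - c) * (t - ω * c) * (t - ω ^ 2 * c) = 0 := by
      linear_combination ht + (-c * t ^ 2 + ω * c ^ 2 * t - (ω - 1) * c ^ 3) * hω
    rcases mul_eq_zero.mp h0 with h | h
    · rcases mul_eq_zero.mp h with h' | h'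
      · exact Or.inl (sub_eq_zero.mp h')
      · exact Or.inr (Or.inl (sub_eq_zero.mp h'))
    · exact Or.inr (Or.inr (sub_eq_zero.mp h))
  constructor
  · rintro ⟨x, y, z, hne, h1, h2, h3, h4⟩
    have hz : z ≠ 0 := by
      rintro rfl
      apply hne
      refine ⟨funext fun i => ?_, funext fun i => ?_, rfl⟩
      · have e := h2 i
        have : x i ^ 2 = 0 := by linear_combination -e
        exact pow_eq_zero_iff two_ne_zero |>.mp this
      · have e := h3 i
        have : y i ^ 2 = 0 := by linear_combination -e
        exact pow_eq_zero_iff two_ne_zero |>.mp this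
    have hx3 : ∀ i, x i ^ 3 = z ^ 3 := by
      intro i
      have e1 := h1 i
      have e2 := h2 i
      linear_combination (-(x i)) * e2 + z * e1
    have hx0 : ∀ i, x i ≠ 0 := by
      intro i h
      have e1 := h1 i
      rw [h] at e1
      apply hz
      have hz2 : z ^ 2 = 0 := by linear_combination -e1
      exact pow_eq_zero_iff two_ne_zero |>.mp hz2
    have hneq : ∀ v w, G.Adj v w → x v ≠ x w := by
      intro v w hadj heq
      have h4v := h4 v
      have hterm : ∀ j ∈ G.neighborFinset v,
          (x v ^ 2 + x v * x j + x j ^ 2) = (if x j = x v then 3 * x v ^ 2 else 0) := by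
        intro j _
        split_ifs with h
        · rw [h]; ring
        · have hc : x j ^ 3 = x v ^ 3 := by rw [hx3 j, hx3 v]
          have h0 : (x v - x j) * (x v ^ 2 + x v * x j + x j ^ 2) = 0 := by
            linear_combination -hc
          rcases mul_eq_zero.mp h0 with h' | h'
          · exact absurd (sub_eq_zero.mp h').symm h
          · exact h'
      rw [Finset.sum_congr rfl hterm, Finset.sum_ite, Finset.sum_const,
        Finset.sum_const_zero, add_zero] at h4v
      rcases smul_eq_zero.mp h4v with hcard | hval
      · have hw : w ∈ Finset.filter (fun j => x j = x v) (G.neighborFinset v) := by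
          simp [SimpleGraph.mem_neighborFinset, hadj, heq.symm]
        rw [Finset.card_eq_zero.mp hcard] at hw
        simp at hw
      · rcases mul_eq_zero.mp hval with h' | h'
        · norm_num at h'
        · exact hx0 v (pow_eq_zero_iff two_ne_zero |>.mp h')
    have hne1 : ω * z ≠ z := fun h => hω1 (mul_right_cancel₀ hz (by rw [h, one_mul]))
    have hne2 : ω ^ 2 * z ≠ z := fun h => hω21 (mul_right_cancel₀ hz (by rw [h, one_mul]))
    have hne3 : ω * z ≠ ω ^ 2 * z := fun h => hωω2 (mul_right_cancel₀ hz h)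
    classical
    set fval : ℂ → Fin 3 := fun t => if t = z then 0 else if t = ω * z then 1 else 2 with hfval
    have f1 : fval z = 0 := by simp [hfval]
    have f2 : fval (ω * z) = 1 := by simp [hfval, hne1]
    have f3 : fval (ω ^ 2 * z) = 2 := by simp [hfval, hne2, hne3.symm]
    refine ⟨SimpleGraph.Coloring.mk (fun v => fval (x v)) ?_⟩
    intro v w hadj
    have hxx := hneq v w hadj
    show fval (x v) ≠ fval (x w)
    rcases hroot (x v) z (hx3 v) with hv | hv | hv <;>
      rcases hroot (x w) z (hx3 w) with hw | hw | hw
    · exact absurd (hv.trans hw.symm) hxx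
    · rw [hv, hw, f1, f2]; decide
    · rw [hv, hw, f1, f3]; decide
    · rw [hv, hw, f2, f1]; decide
    · exact absurd (hv.trans hw.symm) hxx
    · rw [hv, hw, f2, f3]; decide
    · rw [hv, hw, f3, f1]; decide
    · rw [hv, hw, f3, f2]; decide
    · exact absurd (hv.trans hw.symm) hxx
  · rintro ⟨C⟩
    have hcube : ∀ m : ℕ, (ω ^ m) ^ 3 = 1 := by
      intro m
      rw [← pow_mul, mul_comm, pow_mul, hω3, one_pow]
    have hinj' : ∀ a b : ℕ, a < 3 → b < 3 → a ≠ b → ω ^ a ≠ ω ^ b := by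
      intro a b ha hb hab
      interval_cases a <;> interval_cases b <;>
        (try simp only [pow_zero, pow_one]) <;>
        first
          | exact absurd rfl hab
          | exact fun h => hω1 h.symm
          | exact fun h => hω21 h.symm
          | exact hω1
          | exact hωω2
          | exact hω21
          | exact fun h => hωω2 h.symm
    have hinj : ∀ a b : Fin 3, a ≠ b → ω ^ (a : ℕ) ≠ ω ^ (b : ℕ) :=
      fun a b hab => hinj' a b a.isLt b.isLt (fun h => hab (Fin.ext h))
    refine ⟨fun i => ω ^ (C i : ℕ), fun i => (ω ^ (C i : ℕ)) ^ 2, 1, ?_, ?_, ?_, ?_, ?_⟩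
    · rintro ⟨-, -, h⟩; exact one_ne_zero h
    · intro i; linear_combination hcube (C i)
    · intro i; ring
    · intro i; linear_combination (-(ω ^ (C i : ℕ))) * hcube (C i)
    · intro i
      apply Finset.sum_eq_zero
      intro j hj
      have hadj : G.Adj i j := by rwa [SimpleGraph.mem_neighborFinset] at hj
      have hx : ω ^ (C i : ℕ) ≠ ω ^ (C j : ℕ) := hinj _ _ (C.valid hadj)
      have h0 : (ω ^ (C i : ℕ) - ω ^ (C j : ℕ)) *
          ((ω ^ (C i : ℕ)) ^ 2 + ω ^ (C i : ℕ) * ω ^ (C j : ℕ) + (ω ^ (C j : ℕ)) ^ 2) = 0 := by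
        linear_combination hcube (C i) - hcube (C j)
      rcases mul_eq_zero.mp h0 with h' | h'
      · exact absurd (sub_eq_zero.mp h') hx
      · exact h'
end

section
/- (Motzkin–Straus) Let G = (V,E) be a simple graph on n ≥ 1 vertices with clique number ω(G), and let Δ_n := {(x_1,…,x_n) ∈ ℝ^n : x_i ≥ 0 for all i, Σ_{i=1}^n x_i = 1} be the standard simplex. Then 1 − 1/ω(G) = 2 · max_{x ∈ Δ_n} Σ_{{i,j} ∈ E} x_i x_j. -/
/-!
Write the form as `xᵀ A x` with `A` the adjacency matrix. Since `A`, the adjacency matrix of the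
complement and the identity add up to the all-ones matrix, `xᵀ A x ≤ (∑ xᵢ)² - ∑ xᵢ²` for
`x ≥ 0`, with equality when the support of `x` is a clique. On the simplex, Cauchy–Schwarz over a
clique support gives `∑ xᵢ² ≥ 1/ω`, and the uniform vector on a maximum clique attains `1 - 1/ω`.
If the support is not a clique, take non-adjacent `a, b` in it with `(A x)_b ≤ (A x)_a`: moving
the weight of `b` onto `a` changes `xᵀ A x` by `2 x_b ((A x)_a - (A x)_b) ≥ 0` and shrinks the
support, so induction on the support finishes the upper bound.
-/

open Finset Matrix

namespace SimpleGraph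

variable {V R : Type*} [Fintype V] (G : SimpleGraph V)

theorem cliqueNum_pos [Nonempty V] : 0 < G.cliqueNum := by
  obtain ⟨v⟩ := ‹Nonempty V›
  have hv : G.IsClique (({v} : Finset V) : Set V) := by simp
  exact (by simpa using hv.card_le_cliqueNum : 1 ≤ G.cliqueNum)

variable [DecidableRel G.Adj]

theorem two_mul_sum_edgeFinset_lift [NonAssocSemiring R]
    (f : {f : V → V → R // ∀ a b, f a b = f b a}) :
    2 * ∑ e ∈ G.edgeFinset, Sym2.lift f e = ∑ i, ∑ j, if G.Adj i j then f.1 i j else 0 := by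
  classical
  have hdarts : ∑ i, ∑ j, (if G.Adj i j then f.1 i j else 0) = ∑ d : G.Dart, f.1 d.fst d.snd := by
    rw [← sum_product', ← sum_filter]
    exact sum_bij' (fun p hp ↦ ⟨p, (mem_filter.1 hp).2⟩) (fun d _ ↦ (d.fst, d.snd))
      (by simp) (fun d _ ↦ by simp) (by simp) (by simp) (by simp)
  rw [hdarts, mul_sum, ← sum_fiberwise_of_maps_to (t := G.edgeFinset) (g := Dart.edge)
    (fun d _ ↦ by simp)]
  refine sum_congr rfl fun e he ↦ ?_
  obtain ⟨d, rfl⟩ : ∃ d : G.Dart, d.edge = e := by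
    induction e using Sym2.ind with
    | _ a b => exact ⟨⟨(a, b), by simpa using he⟩, rfl⟩
  rw [d.edge_fiber, sum_pair d.symm_ne.symm]
  simp [Dart.edge, f.2 d.snd d.fst, two_mul]

theorem dotProduct_adjMatrix_mulVec_nonneg [CommSemiring R] [PartialOrder R]
    [IsOrderedRing R] {x : V → R} (hx : 0 ≤ x) : 0 ≤ x ⬝ᵥ G.adjMatrix R *ᵥ x := by
  rw [dotProduct_mulVec_adjMatrix]
  refine sum_nonneg fun i _ ↦ sum_nonneg fun j _ ↦ ?_
  split_ifs
  exacts [mul_nonneg (hx i) (hx j), le_rfl]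

variable [DecidableEq V]

theorem dotProduct_adjMatrix_mulVec_add_compl [CommRing R] (x : V → R) :
    x ⬝ᵥ G.adjMatrix R *ᵥ x + x ⬝ᵥ Gᶜ.adjMatrix R *ᵥ x + x ⬝ᵥ x = (∑ i, x i) ^ 2 := by
  have hJ : G.adjMatrix R + Gᶜ.adjMatrix R = of 1 - 1 := by
    rw [IsCompl.adjMatrix_add_adjMatrix_eq_adjMatrix_completeGraph R isCompl_compl,
      adjMatrix_completeGraph_eq_of_one_sub_one]
  have hform := congrArg (fun M : Matrix V V R ↦ x ⬝ᵥ M *ᵥ x) hJ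
  simp only [add_mulVec, dotProduct_add, sub_mulVec, dotProduct_sub, one_mulVec] at hform
  rw [hform]
  simp [dotProduct, mulVec, sq, sum_mul]

theorem dotProduct_adjMatrix_mulVec_le_sq_sum_sub [CommRing R] [PartialOrder R] [IsOrderedRing R]
    {x : V → R} (hx : 0 ≤ x) : x ⬝ᵥ G.adjMatrix R *ᵥ x ≤ (∑ i, x i) ^ 2 - x ⬝ᵥ x := by
  rw [← G.dotProduct_adjMatrix_mulVec_add_compl, add_sub_cancel_right]
  exact le_add_of_nonneg_right (Gᶜ.dotProduct_adjMatrix_mulVec_nonneg hx)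

theorem dotProduct_adjMatrix_mulVec_eq_sq_sum_sub_of_isClique [CommRing R] {s : Finset V}
    (hs : G.IsClique (s : Set V)) {x : V → R} (hxs : ∀ i ∉ s, x i = 0) :
    x ⬝ᵥ G.adjMatrix R *ᵥ x = (∑ i, x i) ^ 2 - x ⬝ᵥ x := by
  have hcompl : x ⬝ᵥ Gᶜ.adjMatrix R *ᵥ x = 0 := by
    rw [dotProduct_mulVec_adjMatrix]
    refine sum_eq_zero fun i _ ↦ sum_eq_zero fun j _ ↦ ?_
    split_ifs with h
    · by_cases hi : i ∈ s
      · by_cases hj : j ∈ s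
        · exact absurd (hs hi hj h.1) h.2
        · simp [hxs j hj]
      · simp [hxs i hi]
    · rfl
  rw [← G.dotProduct_adjMatrix_mulVec_add_compl, hcompl]
  ring

theorem dotProduct_adjMatrix_mulVec_add_single_sub_single [CommRing R] {a b : V}
    (hab : ¬ G.Adj a b) (x : V → R) (c : R) :
    (x + Pi.single a c - Pi.single b c) ⬝ᵥ G.adjMatrix R *ᵥ (x + Pi.single a c - Pi.single b c) =
      x ⬝ᵥ G.adjMatrix R *ᵥ x + 2 * c * ((G.adjMatrix R *ᵥ x) a - (G.adjMatrix R *ᵥ x) b) := by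
  have hsymm (y z : V → R) : y ⬝ᵥ G.adjMatrix R *ᵥ z = z ⬝ᵥ G.adjMatrix R *ᵥ y := by
    rw [dotProduct_mulVec, dotProduct_comm]
    conv_rhs => rw [← vecMul_transpose, transpose_adjMatrix]
  rw [add_sub_assoc]
  set d : V → R := Pi.single a c - Pi.single b c
  have hdot (v : V → R) : d ⬝ᵥ v = c * (v a - v b) := by
    simp only [d, sub_dotProduct, single_dotProduct, mul_sub]
  have hdd : d ⬝ᵥ G.adjMatrix R *ᵥ d = 0 := by
    rw [hdot, mulVec_sub, mulVec_single, mulVec_single]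
    simp [hab, G.adj_comm b a]
  rw [add_dotProduct, mulVec_add, dotProduct_add, dotProduct_add, hsymm x d, hdd, hdot]
  ring

theorem exists_le_dotProduct_adjMatrix_mulVec_of_not_adj [CommRing R] [LinearOrder R]
    [IsStrictOrderedRing R] {s : Finset V} {a b : V} (ha : a ∈ s) (hab : a ≠ b)
    (hnadj : ¬ G.Adj a b) {x : V → R} (hx0 : 0 ≤ x) (hxs : ∀ i ∉ s, x i = 0)
    (hle : (G.adjMatrix R *ᵥ x) b ≤ (G.adjMatrix R *ᵥ x) a) :
    ∃ y : V → R, 0 ≤ y ∧ ∑ i, y i = ∑ i, x i ∧ (∀ i ∉ s.erase b, y i = 0) ∧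
      x ⬝ᵥ G.adjMatrix R *ᵥ x ≤ y ⬝ᵥ G.adjMatrix R *ᵥ y := by
  refine ⟨x + Pi.single a (x b) - Pi.single b (x b), fun i ↦ ?_, ?_, fun i hi ↦ ?_, ?_⟩
  · rcases eq_or_ne i b with rfl | hib
    · simp [hab]
    · have hxi : 0 ≤ x i := hx0 i
      have hxb : 0 ≤ x b := hx0 b
      simp only [Pi.zero_apply, Pi.add_apply, Pi.sub_apply, Pi.single_apply, hib, if_false,
        sub_zero]
      split_ifs <;> linarith
  · simp [sum_add_distrib, sum_sub_distrib]
  · rcases eq_or_ne i b with rfl | hib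
    · simp [hab]
    · have his : i ∉ s := fun h ↦ hi (mem_erase.2 ⟨hib, h⟩)
      have hia : i ≠ a := fun h ↦ his (h ▸ ha)
      simp [hxs i his, hia, hib]
  · rw [G.dotProduct_adjMatrix_mulVec_add_single_sub_single hnadj]
    have := mul_nonneg (hx0 b) (sub_nonneg.2 hle)
    linarith

theorem exists_le_dotProduct_adjMatrix_mulVec_of_not_isClique [CommRing R] [LinearOrder R]
    [IsStrictOrderedRing R] {s : Finset V} (hs : ¬ G.IsClique (s : Set V)) {x : V → R}
    (hx0 : 0 ≤ x) (hxs : ∀ i ∉ s, x i = 0) :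
    ∃ b ∈ s, ∃ y : V → R, 0 ≤ y ∧ ∑ i, y i = ∑ i, x i ∧ (∀ i ∉ s.erase b, y i = 0) ∧
      x ⬝ᵥ G.adjMatrix R *ᵥ x ≤ y ⬝ᵥ G.adjMatrix R *ᵥ y := by
  obtain ⟨a, ha, b, hb, hab, hnadj⟩ : ∃ a ∈ s, ∃ b ∈ s, a ≠ b ∧ ¬ G.Adj a b := by
    simpa [IsClique, Set.Pairwise] using hs
  rcases le_total ((G.adjMatrix R *ᵥ x) b) ((G.adjMatrix R *ᵥ x) a) with h | h
  · exact ⟨b, hb, G.exists_le_dotProduct_adjMatrix_mulVec_of_not_adj ha hab hnadj hx0 hxs h⟩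
  · exact ⟨a, ha, G.exists_le_dotProduct_adjMatrix_mulVec_of_not_adj hb hab.symm
      (fun h' ↦ hnadj h'.symm) hx0 hxs h⟩

variable {K : Type*} [Field K] [LinearOrder K] [IsStrictOrderedRing K]

theorem dotProduct_adjMatrix_mulVec_le_of_isClique {s : Finset V} (hs : G.IsClique (s : Set V))
    {x : V → K} (hx0 : 0 ≤ x) (hx1 : ∑ i, x i = 1) (hxs : ∀ i ∉ s, x i = 0) :
    x ⬝ᵥ G.adjMatrix K *ᵥ x ≤ 1 - 1 / G.cliqueNum := by
  have hsum (f : V → K) (hf : ∀ i ∉ s, f i = 0) : ∑ i ∈ s, f i = ∑ i, f i :=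
    sum_subset (subset_univ s) fun i _ hi ↦ hf i hi
  have hxx : x ⬝ᵥ x = ∑ i, x i ^ 2 := by simp only [dotProduct, sq]
  have hcs : 1 ≤ #s * (x ⬝ᵥ x) := by
    have := sq_sum_le_card_mul_sum_sq (s := s) (f := x)
    rwa [hsum x hxs, hx1, one_pow, hsum _ fun i hi ↦ by simp [hxs i hi], ← hxx] at this
  have hcard : (0 : K) < #s := by
    exact_mod_cast card_pos.2 (nonempty_iff_ne_empty.2 fun h ↦ by norm_num [h] at hcs)
  have hω : (#s : K) ≤ G.cliqueNum := by exact_mod_cast hs.card_le_cliqueNum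
  calc x ⬝ᵥ G.adjMatrix K *ᵥ x ≤ 1 - x ⬝ᵥ x := by
        simpa [hx1] using G.dotProduct_adjMatrix_mulVec_le_sq_sum_sub hx0
    _ ≤ 1 - 1 / #s := sub_le_sub_left ((div_le_iff₀' hcard).2 hcs) 1
    _ ≤ 1 - 1 / G.cliqueNum := by gcongr

theorem dotProduct_adjMatrix_mulVec_le_one_sub_inv_cliqueNum {x : V → K} (hx0 : 0 ≤ x)
    (hx1 : ∑ i, x i = 1) : x ⬝ᵥ G.adjMatrix K *ᵥ x ≤ 1 - 1 / G.cliqueNum := by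
  suffices ∀ s : Finset V, ∀ x : V → K, 0 ≤ x → ∑ i, x i = 1 → (∀ i ∉ s, x i = 0) →
      x ⬝ᵥ G.adjMatrix K *ᵥ x ≤ 1 - 1 / G.cliqueNum from this univ x hx0 hx1 (by simp)
  intro s
  induction s using Finset.strongInduction with
  | H s ih =>
    intro x hx0 hx1 hxs
    by_cases hs : G.IsClique (s : Set V)
    · exact G.dotProduct_adjMatrix_mulVec_le_of_isClique hs hx0 hx1 hxs
    · obtain ⟨b, hb, y, hy0, hy1, hys, hxy⟩ :=
        G.exists_le_dotProduct_adjMatrix_mulVec_of_not_isClique hs hx0 hxs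
      exact hxy.trans (ih _ (erase_ssubset hb) y hy0 (hy1.trans hx1) hys)

theorem exists_dotProduct_adjMatrix_mulVec_eq_one_sub_inv_cliqueNum [Nonempty V] :
    ∃ x : V → K, 0 ≤ x ∧ ∑ i, x i = 1 ∧ x ⬝ᵥ G.adjMatrix K *ᵥ x = 1 - 1 / G.cliqueNum := by
  obtain ⟨s, hs⟩ := G.exists_isNClique_cliqueNum
  have hω : (G.cliqueNum : K) ≠ 0 := by exact_mod_cast G.cliqueNum_pos.ne'
  set x : V → K := fun i ↦ if i ∈ s then (G.cliqueNum : K)⁻¹ else 0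
  have hx1 : ∑ i, x i = 1 := by simp [x, hs.card_eq, hω]
  refine ⟨x, fun i ↦ by positivity, hx1, ?_⟩
  have hxx : x ⬝ᵥ x = 1 / G.cliqueNum := by
    simp only [x, dotProduct, mul_ite, ite_mul, zero_mul, mul_zero, sum_ite_mem, univ_inter,
      inter_self, sum_const, hs.card_eq, nsmul_eq_mul]
    field_simp
  rw [G.dotProduct_adjMatrix_mulVec_eq_sq_sum_sub_of_isClique hs.isClique fun i hi ↦ if_neg hi,
    hx1, hxx, one_pow]

end SimpleGraph

/-- Motzkin–Straus: for a simple graph `G` on `n ≥ 1` vertices with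
clique number `ω(G)`, the maximum of `2 ∑_{{i,j} ∈ E} x_i x_j` over the standard
simplex equals `1 − 1/ω(G)` (and is attained). -/
theorem stmt_4 (n : ℕ) (hn : 1 ≤ n) (G : SimpleGraph (Fin n)) [DecidableRel G.Adj] :
    IsGreatest
      {y : ℝ | ∃ x : Fin n → ℝ, (∀ i, 0 ≤ x i) ∧ (∑ i, x i) = 1 ∧
        y = 2 * ∑ e ∈ G.edgeFinset,
          Sym2.lift ⟨fun i j => x i * x j, fun i j => mul_comm _ _⟩ e}
      (1 - 1 / (G.cliqueNum : ℝ)) := by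
  have : Nonempty (Fin n) := ⟨⟨0, hn⟩⟩
  have hform (x : Fin n → ℝ) : 2 * ∑ e ∈ G.edgeFinset,
      Sym2.lift ⟨fun i j => x i * x j, fun _ _ => mul_comm _ _⟩ e =
        x ⬝ᵥ G.adjMatrix ℝ *ᵥ x := by
    rw [G.two_mul_sum_edgeFinset_lift, G.dotProduct_mulVec_adjMatrix]
  constructor
  · obtain ⟨x, hx0, hx1, hx⟩ :=
      G.exists_dotProduct_adjMatrix_mulVec_eq_one_sub_inv_cliqueNum (K := ℝ)
    exact ⟨x, hx0, hx1, by rw [hform, hx]⟩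
  · rintro y ⟨x, hx0, hx1, rfl⟩
    rw [hform]
    exact G.dotProduct_adjMatrix_mulVec_le_one_sub_inv_cliqueNum hx0 hx1
end

section
/- Let G be a simple graph on n ≥ 1 vertices with m edges, and define E_1,…,E_m and M_ℓ as follows: E_k = (1/2)E_{i_k j_k} + (1/2)E_{j_k i_k} for the k-th edge {i_k,j_k}, and M_ℓ := max_{‖u‖₂ = 1} { Σ_{i=1}^{ℓ} (u^T (ℓ^{−1} I) u)² + 2 Σ_{k=1}^{m} (u^T E_k u)² }. Then M_ℓ = max_{‖u‖₂ = ‖v‖₂ = 1} { Σ_{i=1}^{ℓ} (u^T (ℓ^{−1} I) v)² + 2 Σ_{k=1}^{m} (u^T E_k v)² }, i.e. the maximum of the bilinear sum-of-squares over pairs of unit vectors u, v ∈ ℝ^n equals the maximum of the corresponding quadratic sum-of-squares over a single unit vector. -/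
open Matrix

/-!
Polarization reduces the bilinear problem to the quadratic one. Fix unit vectors `u, v`, put
`z k = uᵀ A_k v`, `S = ∑ z_k²` and `C = ∑ z_k A_k`, so that `uᵀ C v = S`. By Cauchy–Schwarz,
`(wᵀ C w)² ≤ S · ∑ (wᵀ A_k w)² ≤ S M ‖w‖⁴`, where `M` is the quadratic maximum. Since `C` is
symmetric, `4 uᵀ C v = (u+v)ᵀ C (u+v) - (u-v)ᵀ C (u-v)` and `‖u+v‖² + ‖u-v‖² = 4`, hence
`S ≤ √(S M)`, i.e. `S ≤ M`. The reverse inequality is the diagonal `u = v`.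
The theorem is the case of the family made of `ℓ` copies of `ℓ⁻¹ I` and the matrices `√2 E_k`.
-/

section

variable {ι κ : Type*} [Fintype ι] [Fintype κ]

lemma isCompact_setOf_sum_sq_eq_one : IsCompact {u : ι → ℝ | ∑ i, u i ^ 2 = 1} := by
  refine (isCompact_closedBall (0 : ι → ℝ) 1).of_isClosed_subset
    (isClosed_eq (by fun_prop) continuous_const) fun u hu => ?_
  rw [Metric.mem_closedBall, dist_zero_right, pi_norm_le_iff_of_nonneg zero_le_one]
  intro i
  have : u i ^ 2 ≤ 1 := hu ▸ Finset.single_le_sum (fun j _ => sq_nonneg (u j)) (Finset.mem_univ i)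
  rw [Real.norm_eq_abs, ← sq_le_one_iff_abs_le_one]
  exact this

lemma dotProduct_mulVec_comm_of_isSymm {R : Type*} [CommSemiring R] {C : Matrix ι ι R}
    (hC : C.IsSymm) (u v : ι → R) : u ⬝ᵥ C *ᵥ v = v ⬝ᵥ C *ᵥ u := by
  conv_lhs => rw [← hC.eq]
  rw [dotProduct_mulVec, vecMul_transpose, dotProduct_comm]

lemma le_mul_sum_sq_sq_of_forall_sum_sq_eq_one {f : (ι → ℝ) → ℝ} {M : ℝ}
    (hf : ∀ (c : ℝ) w, f (c • w) = c ^ 4 * f w) (hM : ∀ w, ∑ i, w i ^ 2 = 1 → f w ≤ M)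
    (w : ι → ℝ) : f w ≤ M * (∑ i, w i ^ 2) ^ 2 := by
  set s := ∑ i, w i ^ 2
  have hs : 0 ≤ s := Finset.sum_nonneg fun i _ => sq_nonneg (w i)
  rcases hs.eq_or_lt with hs0 | hspos
  · have hw : w = 0 := funext fun i => pow_eq_zero_iff two_ne_zero |>.1 <|
      (Finset.sum_eq_zero_iff_of_nonneg fun j _ => sq_nonneg (w j)).1 hs0.symm i
        (Finset.mem_univ i)
    have hf0 : f 0 = 0 := by simpa using hf 0 0
    rw [hw, hf0, ← hs0]
    simp
  · set c := (√s)⁻¹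
    have hc : c ^ 2 * s = 1 := by
      rw [inv_pow, Real.sq_sqrt hs, inv_mul_cancel₀ hspos.ne']
    have hunit : ∑ i, (c • w) i ^ 2 = 1 := by
      simp only [Pi.smul_apply, smul_eq_mul, mul_pow, ← Finset.mul_sum]
      exact hc
    have := hM _ hunit
    rw [hf] at this
    calc f w = (c ^ 2 * s) ^ 2 * f w := by rw [hc, one_pow, one_mul]
      _ = s ^ 2 * (c ^ 4 * f w) := by ring
      _ ≤ M * s ^ 2 := by nlinarith [sq_nonneg s]

lemma dotProduct_mulVec_le_of_abs_le {C : Matrix ι ι ℝ} (hC : C.IsSymm) {K : ℝ}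
    (hK : ∀ w, |w ⬝ᵥ C *ᵥ w| ≤ K * ∑ i, w i ^ 2) {u v : ι → ℝ}
    (hu : ∑ i, u i ^ 2 = 1) (hv : ∑ i, v i ^ 2 = 1) : u ⬝ᵥ C *ᵥ v ≤ K := by
  have hpolar : (u + v) ⬝ᵥ C *ᵥ (u + v) - (u - v) ⬝ᵥ C *ᵥ (u - v) = 4 * (u ⬝ᵥ C *ᵥ v) := by
    simp only [mulVec_add, mulVec_sub, dotProduct_add, dotProduct_sub, add_dotProduct,
      sub_dotProduct, dotProduct_mulVec_comm_of_isSymm hC v u]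
    ring
  have hpar : ∑ i, (u + v) i ^ 2 + ∑ i, (u - v) i ^ 2 = 4 := by
    rw [← Finset.sum_add_distrib]
    calc ∑ i, ((u + v) i ^ 2 + (u - v) i ^ 2) = 2 * ∑ i, u i ^ 2 + 2 * ∑ i, v i ^ 2 := by
          simp only [Finset.mul_sum, ← Finset.sum_add_distrib, Pi.add_apply, Pi.sub_apply]
          exact Finset.sum_congr rfl fun i _ => by ring
      _ = 4 := by rw [hu, hv]; norm_num
  have hsum : K * ∑ i, (u + v) i ^ 2 + K * ∑ i, (u - v) i ^ 2 = 4 * K := by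
    rw [← mul_add, hpar, mul_comm]
  linarith [hK (u + v), hK (u - v), le_abs_self ((u + v) ⬝ᵥ C *ᵥ (u + v)),
    neg_abs_le ((u - v) ⬝ᵥ C *ᵥ (u - v))]

def sumSqForm (A : κ → Matrix ι ι ℝ) (u v : ι → ℝ) : ℝ :=
  ∑ k, (u ⬝ᵥ A k *ᵥ v) ^ 2

variable (A : κ → Matrix ι ι ℝ)

lemma sumSqForm_nonneg (u v : ι → ℝ) : 0 ≤ sumSqForm A u v :=
  Finset.sum_nonneg fun _ _ => sq_nonneg _

lemma sumSqForm_smul_smul (c : ℝ) (w : ι → ℝ) :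
    sumSqForm A (c • w) (c • w) = c ^ 4 * sumSqForm A w w := by
  simp only [sumSqForm, Finset.mul_sum, mulVec_smul, dotProduct_smul, smul_dotProduct,
    smul_eq_mul]
  exact Finset.sum_congr rfl fun k _ => by ring

lemma continuous_sumSqForm_self : Continuous fun w => sumSqForm A w w := by
  unfold sumSqForm
  simp only [dotProduct, mulVec]
  fun_prop

lemma sq_dotProduct_sum_smul_mulVec_le (z : κ → ℝ) (w : ι → ℝ) :
    (w ⬝ᵥ (∑ k, z k • A k) *ᵥ w) ^ 2 ≤ (∑ k, z k ^ 2) * sumSqForm A w w := by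
  simp only [sum_mulVec, dotProduct_sum, smul_mulVec, dotProduct_smul, smul_eq_mul]
  exact Finset.sum_mul_sq_le_sq_mul_sq _ _ _

theorem sumSqForm_le_of_forall_sumSqForm_self_le (hA : ∀ k, (A k).IsSymm) {M : ℝ}
    (hM : ∀ w, ∑ i, w i ^ 2 = 1 → sumSqForm A w w ≤ M) {u v : ι → ℝ}
    (hu : ∑ i, u i ^ 2 = 1) (hv : ∑ i, v i ^ 2 = 1) : sumSqForm A u v ≤ M := by
  set z := fun k => u ⬝ᵥ A k *ᵥ v
  set S := sumSqForm A u v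
  set C := ∑ k, z k • A k
  have hS : 0 ≤ S := sumSqForm_nonneg A u v
  have hM₀ : 0 ≤ M := (sumSqForm_nonneg A u u).trans (hM u hu)
  have hC : C.IsSymm := by
    simp only [C, IsSymm, transpose_sum, transpose_smul, (hA _).eq]
  have hSC : u ⬝ᵥ C *ᵥ v = S := by
    simp only [C, sum_mulVec, dotProduct_sum, smul_mulVec, dotProduct_smul, smul_eq_mul, S,
      sumSqForm, z, sq]
  have hquad : ∀ w, |w ⬝ᵥ C *ᵥ w| ≤ √(S * M) * ∑ i, w i ^ 2 := fun w => by
    have h : (w ⬝ᵥ C *ᵥ w) ^ 2 ≤ S * (M * (∑ i, w i ^ 2) ^ 2) :=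
      (sq_dotProduct_sum_smul_mulVec_le A z w).trans <| mul_le_mul_of_nonneg_left
        (le_mul_sum_sq_sq_of_forall_sum_sq_eq_one (sumSqForm_smul_smul A) hM w) hS
    replace h := Real.abs_le_sqrt h
    rwa [← mul_assoc, Real.sqrt_mul (mul_nonneg hS hM₀),
      Real.sqrt_sq (Finset.sum_nonneg fun i _ => sq_nonneg (w i))] at h
  have hSle : S ≤ √(S * M) := hSC ▸ dotProduct_mulVec_le_of_abs_le hC hquad hu hv
  have hsq : S ^ 2 ≤ S * M := by
    simpa [Real.sq_sqrt (mul_nonneg hS hM₀)] using pow_le_pow_left₀ hS hSle 2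
  nlinarith

theorem exists_isGreatest_sumSqForm [Nonempty ι] (hA : ∀ k, (A k).IsSymm) :
    ∃ M : ℝ,
      IsGreatest {y | ∃ u : ι → ℝ, ∑ i, u i ^ 2 = 1 ∧ y = sumSqForm A u u} M ∧
      IsGreatest {y | ∃ u v : ι → ℝ, ∑ i, u i ^ 2 = 1 ∧ ∑ i, v i ^ 2 = 1 ∧
        y = sumSqForm A u v} M := by
  classical
  have hne : {u : ι → ℝ | ∑ i, u i ^ 2 = 1}.Nonempty :=
    ⟨Pi.single (Classical.arbitrary ι) 1, by simp [sq, Pi.single_apply]⟩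
  obtain ⟨w, hw, hmax⟩ := isCompact_setOf_sum_sq_eq_one.exists_isMaxOn hne
    (continuous_sumSqForm_self A).continuousOn
  refine ⟨sumSqForm A w w, ⟨⟨w, hw, rfl⟩, ?_⟩, ⟨⟨w, w, hw, hw, rfl⟩, ?_⟩⟩
  · rintro _ ⟨u, hu, rfl⟩
    exact hmax hu
  · rintro _ ⟨u, v, hu, hv, rfl⟩
    exact sumSqForm_le_of_forall_sumSqForm_self_le A hA (fun _ hu => hmax hu) hu hv

end

theorem stmt_7_general (n m : ℕ) (hn : 1 ≤ n)
    (a b : Fin m → Fin n)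
    (E : Fin m → Matrix (Fin n) (Fin n) ℝ)
    (hE : ∀ k, E k = (1/2 : ℝ) • Matrix.single (a k) (b k) 1
                   + (1/2 : ℝ) • Matrix.single (b k) (a k) 1)
    (ℓ : ℕ) :
    ∃ M : ℝ,
      IsGreatest
        {y : ℝ | ∃ u : Fin n → ℝ, (∑ i, u i ^ 2) = 1 ∧
          y = (∑ _i : Fin ℓ,
                (u ⬝ᵥ ((ℓ : ℝ)⁻¹ • (1 : Matrix (Fin n) (Fin n) ℝ)).mulVec u) ^ 2)
            + 2 * ∑ k, (u ⬝ᵥ (E k).mulVec u) ^ 2} M ∧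
      IsGreatest
        {y : ℝ | ∃ u v : Fin n → ℝ, (∑ i, u i ^ 2) = 1 ∧ (∑ i, v i ^ 2) = 1 ∧
          y = (∑ _i : Fin ℓ,
                (u ⬝ᵥ ((ℓ : ℝ)⁻¹ • (1 : Matrix (Fin n) (Fin n) ℝ)).mulVec v) ^ 2)
            + 2 * ∑ k, (u ⬝ᵥ (E k).mulVec v) ^ 2} M := by
  have : Nonempty (Fin n) := ⟨⟨0, hn⟩⟩
  let A : Fin ℓ ⊕ Fin m → Matrix (Fin n) (Fin n) ℝ :=
    Sum.elim (fun _ => (ℓ : ℝ)⁻¹ • 1) (fun k => √2 • E k)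
  have hA : ∀ i, (A i).IsSymm := by
    rintro (i | k)
    · exact isSymm_one.smul _
    · refine IsSymm.smul ?_ _
      rw [hE k, IsSymm, transpose_add, transpose_smul, transpose_smul, transpose_single,
        transpose_single, add_comm]
  have hobj : ∀ u v : Fin n → ℝ,
      ∑ _i : Fin ℓ, (u ⬝ᵥ ((ℓ : ℝ)⁻¹ • (1 : Matrix (Fin n) (Fin n) ℝ)) *ᵥ v) ^ 2
        + 2 * ∑ k, (u ⬝ᵥ E k *ᵥ v) ^ 2 = sumSqForm A u v := fun u v => by
    simp only [sumSqForm, Fintype.sum_sum_type, A, Sum.elim_inl, Sum.elim_inr, smul_mulVec,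
      dotProduct_smul, smul_eq_mul, mul_pow, Real.sq_sqrt zero_le_two, Finset.mul_sum]
  simpa only [hobj] using exists_isGreatest_sumSqForm A hA

/-- the maximum of the quadratic sum-of-squares over a single unit
vector equals the maximum of the corresponding bilinear sum-of-squares over pairs
of unit vectors (both maxima are attained and agree). -/
theorem stmt_7 (n m : ℕ) (hn : 1 ≤ n) (G : SimpleGraph (Fin n)) [DecidableRel G.Adj]
    (a b : Fin m → Fin n)
    (hab : ∀ k, G.Adj (a k) (b k))
    (hinj : Function.Injective fun k => s(a k, b k))
    (hsurj : ∀ e ∈ G.edgeFinset, ∃ k, s(a k, b k) = e)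
    (E : Fin m → Matrix (Fin n) (Fin n) ℝ)
    (hE : ∀ k, E k = (1/2 : ℝ) • Matrix.single (a k) (b k) 1
                   + (1/2 : ℝ) • Matrix.single (b k) (a k) 1)
    (ℓ : ℕ) (hℓ : 0 < ℓ) :
    ∃ M : ℝ,
      IsGreatest
        {y : ℝ | ∃ u : Fin n → ℝ, (∑ i, u i ^ 2) = 1 ∧
          y = (∑ _i : Fin ℓ,
                (u ⬝ᵥ ((ℓ : ℝ)⁻¹ • (1 : Matrix (Fin n) (Fin n) ℝ)).mulVec u) ^ 2)
            + 2 * ∑ k, (u ⬝ᵥ (E k).mulVec u) ^ 2} M ∧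
      IsGreatest
        {y : ℝ | ∃ u v : Fin n → ℝ, (∑ i, u i ^ 2) = 1 ∧ (∑ i, v i ^ 2) = 1 ∧
          y = (∑ _i : Fin ℓ,
                (u ⬝ᵥ ((ℓ : ℝ)⁻¹ • (1 : Matrix (Fin n) (Fin n) ℝ)).mulVec v) ^ 2)
            + 2 * ∑ k, (u ⬝ᵥ (E k).mulVec v) ^ 2} M :=
  stmt_7_general n m hn a b E hE ℓ
end

section
/- Let G be a simple graph on n ≥ 1 vertices with m edges, let E_k = (1/2)E_{i_k j_k} + (1/2)E_{j_k i_k} for the k-th edge {i_k,j_k} of G, and for a positive integer ℓ define T_ℓ := max over unit vectors u, v ∈ ℝ^n and w ∈ ℝ^{ℓ+2m} of Σ_{i=1}^{ℓ} (u^T (ℓ^{−1} I) v) w_i + Σ_{k=1}^{m} (u^T E_k v) w_{ℓ+k} + Σ_{k=1}^{m} (u^T E_k v) w_{ℓ+m+k}, and M_ℓ := max_{‖u‖₂=1} { Σ_{i=1}^{ℓ} (u^T (ℓ^{−1} I) u)² + 2 Σ_{k=1}^{m} (u^T E_k u)² }. Then T_ℓ = M_ℓ^{1/2}. -/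
/-!
Collect the matrices into one family `A` of symmetric matrices (`ℓ` copies of `ℓ⁻¹ I`, then
every `E_k` twice), so that `T` maximises `∑ᵢ (uᵀ Aᵢ v) wᵢ` and `M` maximises `∑ᵢ (uᵀ Aᵢ u)²`.
By Cauchy–Schwarz in `w`, taking `u = v = u₀` for a maximiser `u₀` of `M` gives the value `√M`.
Conversely, for fixed `w` put `q(p) = ∑ᵢ (pᵀ Aᵢ p) wᵢ`; Cauchy–Schwarz and homogeneity give
`|q(p)| ≤ ‖p‖² √M`, symmetry gives `4 ∑ᵢ (uᵀ Aᵢ v) wᵢ = q(u + v) - q(u - v)`, and the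
parallelogram law `‖u + v‖² + ‖u - v‖² = 4` bounds this by `4 √M`.
-/

open Matrix Finset

variable {σ ι : Type*} [Fintype σ] [Fintype ι]

theorem Matrix.IsSymm.dotProduct_mulVec_comm {A : Matrix σ σ ℝ} (hA : A.IsSymm) (u v : σ → ℝ) :
    u ⬝ᵥ A *ᵥ v = v ⬝ᵥ A *ᵥ u := by
  rw [dotProduct_mulVec, dotProduct_comm, ← mulVec_transpose, hA.eq]

theorem Matrix.IsSymm.polarization {A : Matrix σ σ ℝ} (hA : A.IsSymm) (u v : σ → ℝ) :
    (u + v) ⬝ᵥ A *ᵥ (u + v) - (u - v) ⬝ᵥ A *ᵥ (u - v) = 4 * (u ⬝ᵥ A *ᵥ v) := by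
  simp only [mulVec_add, mulVec_sub, add_dotProduct, sub_dotProduct, dotProduct_add,
    dotProduct_sub, hA.dotProduct_mulVec_comm v u]
  ring

theorem sum_add_sq_add_sum_sub_sq (u v : σ → ℝ) :
    ∑ j, (u + v) j ^ 2 + ∑ j, (u - v) j ^ 2 = 2 * ∑ j, u j ^ 2 + 2 * ∑ j, v j ^ 2 := by
  simp only [Pi.add_apply, Pi.sub_apply, mul_sum, ← sum_add_distrib]
  exact sum_congr rfl fun j _ => by ring

theorem isCompact_setOf_sum_sq_eq_one_s8 : IsCompact {p : σ → ℝ | ∑ j, p j ^ 2 = 1} := by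
  convert (isCompact_sphere (0 : EuclideanSpace ℝ σ) 1).image (PiLp.continuous_ofLp 2 _)
  ext p
  simp only [Set.mem_ofPred_eq, Set.mem_image, mem_sphere_zero_iff_norm, EuclideanSpace.norm_eq,
    Real.norm_eq_abs, sq_abs, Real.sqrt_eq_one]
  exact ⟨fun h => ⟨WithLp.toLp 2 p, h, rfl⟩, fun ⟨x, hx, e⟩ => e ▸ hx⟩

theorem exists_sum_mul_eq_sqrt_sum_sq [Nonempty ι] (c : ι → ℝ) :
    ∃ w : ι → ℝ, ∑ i, w i ^ 2 = 1 ∧ ∑ i, c i * w i = √(∑ i, c i ^ 2) := by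
  classical
  have hc : 0 ≤ ∑ i, c i ^ 2 := sum_nonneg fun i _ => sq_nonneg (c i)
  rcases hc.eq_or_lt with hc0 | hcpos
  · have hc : c = 0 := funext fun i => by
      simpa using congr_fun ((Fintype.sum_eq_zero_iff_of_nonneg fun i => sq_nonneg (c i)).1
        hc0.symm) i
    obtain ⟨i₀⟩ := ‹Nonempty ι›
    exact ⟨Pi.single i₀ 1, by simp [Pi.single_apply], by simp [hc]⟩
  · refine ⟨fun i => c i / √(∑ i, c i ^ 2), ?_, ?_⟩
    · simp only [div_pow, ← sum_div, Real.sq_sqrt hc]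
      exact div_self hcpos.ne'
    · simp only [mul_div_assoc', ← sq, ← sum_div]
      exact Real.div_sqrt

section QuadraticFamily

variable (A : ι → Matrix σ σ ℝ) {M : ℝ}

theorem sum_sq_dotProduct_mulVec_le
    (hM : ∀ p : σ → ℝ, ∑ j, p j ^ 2 = 1 → ∑ i, (p ⬝ᵥ A i *ᵥ p) ^ 2 ≤ M) (p : σ → ℝ) :
    ∑ i, (p ⬝ᵥ A i *ᵥ p) ^ 2 ≤ (∑ j, p j ^ 2) ^ 2 * M := by
  set s := ∑ j, p j ^ 2
  have hs : 0 ≤ s := sum_nonneg fun j _ => sq_nonneg (p j)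
  rcases hs.eq_or_lt with hs0 | hspos
  · have hp : p = 0 := funext fun j => by
      simpa using congr_fun ((Fintype.sum_eq_zero_iff_of_nonneg fun j => sq_nonneg (p j)).1
        hs0.symm) j
    simp [hp, ← hs0]
  · have hq : ∑ j, ((√s)⁻¹ • p) j ^ 2 = 1 := by
      simp only [Pi.smul_apply, smul_eq_mul, mul_pow, ← mul_sum, inv_pow, Real.sq_sqrt hs]
      exact inv_mul_cancel₀ hspos.ne'
    have hscale : ∀ i, ((√s)⁻¹ • p) ⬝ᵥ A i *ᵥ ((√s)⁻¹ • p) = s⁻¹ * (p ⬝ᵥ A i *ᵥ p) := by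
      intro i
      rw [mulVec_smul, smul_dotProduct, dotProduct_smul, smul_eq_mul, smul_eq_mul, ← mul_assoc,
        ← sq, inv_pow, Real.sq_sqrt hs]
    have := hM _ hq
    simp only [hscale, mul_pow, ← mul_sum] at this
    calc ∑ i, (p ⬝ᵥ A i *ᵥ p) ^ 2 = s ^ 2 * ((s⁻¹) ^ 2 * ∑ i, (p ⬝ᵥ A i *ᵥ p) ^ 2) := by
          field_simp
      _ ≤ s ^ 2 * M := by gcongr

theorem abs_sum_dotProduct_mulVec_mul_le
    (hM : ∀ p : σ → ℝ, ∑ j, p j ^ 2 = 1 → ∑ i, (p ⬝ᵥ A i *ᵥ p) ^ 2 ≤ M)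
    {w : ι → ℝ} (hw : ∑ i, w i ^ 2 = 1) (p : σ → ℝ) :
    |∑ i, (p ⬝ᵥ A i *ᵥ p) * w i| ≤ (∑ j, p j ^ 2) * √M := by
  have hcs := sum_mul_sq_le_sq_mul_sq univ (fun i => p ⬝ᵥ A i *ᵥ p) w
  rw [hw, mul_one] at hcs
  calc |∑ i, (p ⬝ᵥ A i *ᵥ p) * w i| ≤ √((∑ j, p j ^ 2) ^ 2 * M) :=
        Real.abs_le_sqrt (hcs.trans (sum_sq_dotProduct_mulVec_le A hM p))
    _ = (∑ j, p j ^ 2) * √M := by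
        rw [Real.sqrt_mul (sq_nonneg _), Real.sqrt_sq (sum_nonneg fun j _ => sq_nonneg (p j))]

theorem sum_dotProduct_mulVec_mul_le_sqrt (hA : ∀ i, (A i).IsSymm)
    (hM : ∀ p : σ → ℝ, ∑ j, p j ^ 2 = 1 → ∑ i, (p ⬝ᵥ A i *ᵥ p) ^ 2 ≤ M)
    {u v : σ → ℝ} {w : ι → ℝ} (hu : ∑ j, u j ^ 2 = 1) (hv : ∑ j, v j ^ 2 = 1)
    (hw : ∑ i, w i ^ 2 = 1) :
    ∑ i, (u ⬝ᵥ A i *ᵥ v) * w i ≤ √M := by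
  have hsplit : 4 * ∑ i, (u ⬝ᵥ A i *ᵥ v) * w i =
      ∑ i, ((u + v) ⬝ᵥ A i *ᵥ (u + v)) * w i - ∑ i, ((u - v) ⬝ᵥ A i *ᵥ (u - v)) * w i := by
    simp only [mul_sum, ← sum_sub_distrib, ← sub_mul, (hA _).polarization, mul_assoc]
  have hadd := (abs_le.1 (abs_sum_dotProduct_mulVec_mul_le A hM hw (u + v))).2
  have hsub := (abs_le.1 (abs_sum_dotProduct_mulVec_mul_le A hM hw (u - v))).1
  have hpar : (∑ j, (u + v) j ^ 2) * √M + (∑ j, (u - v) j ^ 2) * √M = 4 * √M := by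
    rw [← add_mul, sum_add_sq_add_sum_sub_sq, hu, hv]
    norm_num
  linarith

theorem isGreatest_sqrt_of_isGreatest [Nonempty ι] (hA : ∀ i, (A i).IsSymm)
    (hM : IsGreatest {y | ∃ u : σ → ℝ, ∑ j, u j ^ 2 = 1 ∧ y = ∑ i, (u ⬝ᵥ A i *ᵥ u) ^ 2} M) :
    IsGreatest {y | ∃ (u v : σ → ℝ) (w : ι → ℝ), ∑ j, u j ^ 2 = 1 ∧ ∑ j, v j ^ 2 = 1 ∧
      ∑ i, w i ^ 2 = 1 ∧ y = ∑ i, (u ⬝ᵥ A i *ᵥ v) * w i} (√M) := by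
  refine ⟨?_, ?_⟩
  · obtain ⟨u, hu, rfl⟩ := hM.1
    obtain ⟨w, hw, hsum⟩ := exists_sum_mul_eq_sqrt_sum_sq fun i => u ⬝ᵥ A i *ᵥ u
    exact ⟨u, u, w, hu, hu, hw, hsum.symm⟩
  · rintro _ ⟨u, v, w, hu, hv, hw, rfl⟩
    exact sum_dotProduct_mulVec_mul_le_sqrt A hA (fun p hp => hM.2 ⟨p, hp, rfl⟩) hu hv hw

theorem exists_isGreatest_sum_sq_dotProduct_mulVec [Nonempty σ] :
    ∃ M, IsGreatest {y | ∃ u : σ → ℝ, ∑ j, u j ^ 2 = 1 ∧ y = ∑ i, (u ⬝ᵥ A i *ᵥ u) ^ 2} M := by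
  classical
  obtain ⟨j₀⟩ := ‹Nonempty σ›
  obtain ⟨u, hu, hmax⟩ := isCompact_setOf_sum_sq_eq_one_s8.exists_isMaxOn
    ⟨Pi.single j₀ 1, by simp [Pi.single_apply]⟩
    (f := fun u : σ → ℝ => ∑ i, (u ⬝ᵥ A i *ᵥ u) ^ 2) (by fun_prop)
  exact ⟨_, ⟨u, hu, rfl⟩, by rintro _ ⟨p, hp, rfl⟩; exact hmax hp⟩

end QuadraticFamily

theorem stmt_8_general (n m : ℕ) (hn : 1 ≤ n)
    (a b : Fin m → Fin n)
    (E : Fin m → Matrix (Fin n) (Fin n) ℝ)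
    (hE : ∀ k, E k = (1/2 : ℝ) • Matrix.single (a k) (b k) 1
                   + (1/2 : ℝ) • Matrix.single (b k) (a k) 1)
    (ℓ : ℕ) (hℓ : 0 < ℓ) :
    ∃ T M : ℝ,
      IsGreatest
        {y : ℝ | ∃ (u v : Fin n → ℝ) (w : Fin ℓ ⊕ Fin m ⊕ Fin m → ℝ),
          (∑ i, u i ^ 2) = 1 ∧ (∑ i, v i ^ 2) = 1 ∧ (∑ i, w i ^ 2) = 1 ∧
          y = (∑ i : Fin ℓ,
                (u ⬝ᵥ ((ℓ : ℝ)⁻¹ • (1 : Matrix (Fin n) (Fin n) ℝ)).mulVec v)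
                  * w (Sum.inl i))
            + (∑ k, (u ⬝ᵥ (E k).mulVec v) * w (Sum.inr (Sum.inl k)))
            + (∑ k, (u ⬝ᵥ (E k).mulVec v) * w (Sum.inr (Sum.inr k)))} T ∧
      IsGreatest
        {y : ℝ | ∃ u : Fin n → ℝ, (∑ i, u i ^ 2) = 1 ∧
          y = (∑ _i : Fin ℓ,
                (u ⬝ᵥ ((ℓ : ℝ)⁻¹ • (1 : Matrix (Fin n) (Fin n) ℝ)).mulVec u) ^ 2)
            + 2 * ∑ k, (u ⬝ᵥ (E k).mulVec u) ^ 2} M ∧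
      T = Real.sqrt M := by
  let A : Fin ℓ ⊕ Fin m ⊕ Fin m → Matrix (Fin n) (Fin n) ℝ :=
    Sum.elim (fun _ => (ℓ : ℝ)⁻¹ • 1) (Sum.elim E E)
  have hEsymm (k : Fin m) : (E k).IsSymm := by
    simp only [IsSymm, hE k, transpose_add, transpose_smul, transpose_single, add_comm]
  have hA : ∀ i, (A i).IsSymm := by
    rintro (i | k | k)
    exacts [isSymm_one.smul _, hEsymm k, hEsymm k]
  have : Nonempty (Fin n) := ⟨⟨0, hn⟩⟩
  have : Nonempty (Fin ℓ ⊕ Fin m ⊕ Fin m) := ⟨.inl ⟨0, hℓ⟩⟩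
  obtain ⟨M, hM⟩ := exists_isGreatest_sum_sq_dotProduct_mulVec A
  refine ⟨√M, M, ?_, ?_, rfl⟩
  · convert isGreatest_sqrt_of_isGreatest A hA hM using 3
    simp [A, Fintype.sum_sum_type, add_assoc]
  · convert hM using 3
    simp [A, Fintype.sum_sum_type, two_mul]

/-- `T_ℓ = M_ℓ^{1/2}`, where `T_ℓ` is the maximum of the trilinear
form (over unit vectors `u, v ∈ ℝⁿ` and `w ∈ ℝ^{ℓ+2m}`) and `M_ℓ` is the maximum
of the quadratic sum-of-squares over a single unit vector. -/
theorem stmt_8 (n m : ℕ) (hn : 1 ≤ n) (G : SimpleGraph (Fin n)) [DecidableRel G.Adj]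
    (a b : Fin m → Fin n)
    (hab : ∀ k, G.Adj (a k) (b k))
    (hinj : Function.Injective fun k => s(a k, b k))
    (hsurj : ∀ e ∈ G.edgeFinset, ∃ k, s(a k, b k) = e)
    (E : Fin m → Matrix (Fin n) (Fin n) ℝ)
    (hE : ∀ k, E k = (1/2 : ℝ) • Matrix.single (a k) (b k) 1
                   + (1/2 : ℝ) • Matrix.single (b k) (a k) 1)
    (ℓ : ℕ) (hℓ : 0 < ℓ) :
    ∃ T M : ℝ,
      IsGreatest
        {y : ℝ | ∃ (u v : Fin n → ℝ) (w : Fin ℓ ⊕ Fin m ⊕ Fin m → ℝ),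
          (∑ i, u i ^ 2) = 1 ∧ (∑ i, v i ^ 2) = 1 ∧ (∑ i, w i ^ 2) = 1 ∧
          y = (∑ i : Fin ℓ,
                (u ⬝ᵥ ((ℓ : ℝ)⁻¹ • (1 : Matrix (Fin n) (Fin n) ℝ)).mulVec v)
                  * w (Sum.inl i))
            + (∑ k, (u ⬝ᵥ (E k).mulVec v) * w (Sum.inr (Sum.inl k)))
            + (∑ k, (u ⬝ᵥ (E k).mulVec v) * w (Sum.inr (Sum.inr k)))} T ∧
      IsGreatest
        {y : ℝ | ∃ u : Fin n → ℝ, (∑ i, u i ^ 2) = 1 ∧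
          y = (∑ _i : Fin ℓ,
                (u ⬝ᵥ ((ℓ : ℝ)⁻¹ • (1 : Matrix (Fin n) (Fin n) ℝ)).mulVec u) ^ 2)
            + 2 * ∑ k, (u ⬝ᵥ (E k).mulVec u) ^ 2} M ∧
      T = Real.sqrt M :=
  stmt_8_general n m hn a b E hE ℓ hℓ
end

section
/- Let G be a simple graph on n ≥ 1 vertices with m edges and clique number ω = ω(G), let E_k = (1/2)E_{i_k j_k} + (1/2)E_{j_k i_k} for the k-th edge {i_k,j_k} of G, and for a positive integer ℓ define T_ℓ := max over unit vectors u, v ∈ ℝ^n and w ∈ ℝ^{ℓ+2m} of Σ_{i=1}^{ℓ} (u^T (ℓ^{−1} I) v) w_i + Σ_{k=1}^{m} (u^T E_k v) w_{ℓ+k} + Σ_{k=1}^{m} (u^T E_k v) w_{ℓ+m+k}. Then T_ℓ = 1 if and only if ℓ = ω; T_ℓ > 1 if and only if ℓ < ω; and T_ℓ < 1 if and only if ℓ > ω. -/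
/-!
Maximising over `w` first, `T_ℓ` is the largest Euclidean norm of the coefficient vector
`c(u, v)` of `w`, and `‖c(u, v)‖² = (u ⬝ v)² / ℓ + 2 ∑ₖ (uᵀ Eₖ v)²`. With the probability vector
`x = (u² + v²) / 2`, each `(uᵀ Eₖ v)²` is at most `x_{iₖ} x_{jₖ}`, so the second term is at most
`xᵀ A x` for the adjacency matrix `A`, which by the Motzkin–Straus theorem is at most `1 - 1/ω`:
moving the mass of one of two non-adjacent vertices onto the other changes `xᵀ A x` linearly, so
the maximum over the simplex is attained on vectors supported on a clique, where it is
`1 - ∑ xᵢ²`. Both bounds are attained at `u = v` with `u²` uniform on a maximum clique, so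
`T_ℓ = √(1/ℓ + 1 - 1/ω)`.
-/

open Matrix Finset

namespace SimpleGraph

variable {V : Type*} [Fintype V] (G : SimpleGraph V)

lemma one_le_cliqueNum [Nonempty V] : 1 ≤ G.cliqueNum := by
  inhabit V
  simpa using IsClique.card_le_cliqueNum (G := G) (t := {default}) (tc := by simp)

lemma inv_cliqueNum_le_sum_sq_of_isClique_support {x : V → ℝ} (hx : x ∈ stdSimplex ℝ V)
    (hcl : G.IsClique (Function.support x)) :
    (G.cliqueNum : ℝ)⁻¹ ≤ ∑ i, x i ^ 2 := by
  classical
  set s := univ.filter fun i => x i ≠ 0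
  have hs : (s : Set V) = Function.support x := by ext; simp [s]
  have hsum : ∑ i ∈ s, x i = 1 := by rw [sum_filter_ne_zero, hx.2]
  have hcard : (#s : ℝ) ≤ G.cliqueNum := by
    exact_mod_cast IsClique.card_le_cliqueNum (tc := hs ▸ hcl)
  have hCS : (1 : ℝ) ≤ #s * ∑ i ∈ s, x i ^ 2 := by
    simpa [hsum] using sq_sum_le_card_mul_sum_sq (s := s) (f := x)
  have hsub : ∑ i ∈ s, x i ^ 2 ≤ ∑ i, x i ^ 2 :=
    sum_le_sum_of_subset_of_nonneg (subset_univ _) fun i _ _ => sq_nonneg _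
  have hpos : (0 : ℝ) < G.cliqueNum :=
    (Nat.cast_pos.2 (nonempty_of_sum_ne_zero (hsum ▸ one_ne_zero)).card_pos).trans_le hcard
  rw [inv_le_iff_one_le_mul₀' hpos]
  calc 1 ≤ #s * ∑ i ∈ s, x i ^ 2 := hCS
    _ ≤ G.cliqueNum * ∑ i, x i ^ 2 :=
      mul_le_mul hcard hsub (sum_nonneg fun _ _ => sq_nonneg _) hpos.le

variable [DecidableRel G.Adj]

lemma adjMatrix_mulVec_dotProduct_comm (x y : V → ℝ) :
    x ⬝ᵥ G.adjMatrix ℝ *ᵥ y = y ⬝ᵥ G.adjMatrix ℝ *ᵥ x := by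
  rw [dotProduct_mulVec, ← mulVec_transpose, transpose_adjMatrix, dotProduct_comm]

lemma quadForm_adjMatrix_add_smul_single_sub_single [DecidableEq V] (x : V → ℝ) {i j : V}
    (hadj : ¬ G.Adj i j) (t : ℝ) :
    (x + t • (Pi.single i 1 - Pi.single j 1)) ⬝ᵥ
        G.adjMatrix ℝ *ᵥ (x + t • (Pi.single i 1 - Pi.single j 1)) =
      x ⬝ᵥ G.adjMatrix ℝ *ᵥ x + 2 * t * ((G.adjMatrix ℝ *ᵥ x) i - (G.adjMatrix ℝ *ᵥ x) j) := by
  set d : V → ℝ := Pi.single i 1 - Pi.single j 1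
  have hd : ∀ y : V → ℝ, d ⬝ᵥ y = y i - y j := fun y => by
    simp [d, sub_dotProduct, single_dotProduct]
  have hdd : d ⬝ᵥ G.adjMatrix ℝ *ᵥ d = 0 := by
    have hadj' : ¬ G.Adj j i := fun h => hadj h.symm
    simp [hd, d, hadj, hadj']
  rw [mulVec_add, add_dotProduct, dotProduct_add, dotProduct_add, mulVec_smul, smul_dotProduct,
    dotProduct_smul, smul_dotProduct, dotProduct_smul, hdd, adjMatrix_mulVec_dotProduct_comm G x d,
    hd]
  simp only [smul_eq_mul]
  ring

lemma quadForm_adjMatrix_of_isClique_support (x : V → ℝ) (hx : G.IsClique (Function.support x)) :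
    x ⬝ᵥ G.adjMatrix ℝ *ᵥ x = (∑ i, x i) ^ 2 - ∑ i, x i ^ 2 := by
  classical
  have hterm : ∀ i j, (if G.Adj i j then x i * x j else 0) =
      x i * x j - if i = j then x i * x j else 0 := by
    intro i j
    by_cases hij : i = j
    · subst hij; simp
    by_cases hadj : G.Adj i j
    · simp [hadj, hij]
    have : x i = 0 ∨ x j = 0 := by
      by_contra! h
      exact hadj (hx h.1 h.2 hij)
    rcases this with h | h <;> simp [hadj, hij, h]
  simp only [dotProduct_mulVec_adjMatrix, hterm, sum_sub_distrib, sum_ite_eq, mem_univ, if_true,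
    sq, sum_mul_sum]

lemma exists_mem_stdSimplex_support_ssubset_quadForm_le {x : V → ℝ} (hx : x ∈ stdSimplex ℝ V)
    {i j : V} (hi : x i ≠ 0) (hj : x j ≠ 0) (hij : i ≠ j) (hadj : ¬ G.Adj i j) :
    ∃ y ∈ stdSimplex ℝ V, Function.support y ⊂ Function.support x ∧
      x ⬝ᵥ G.adjMatrix ℝ *ᵥ x ≤ y ⬝ᵥ G.adjMatrix ℝ *ᵥ y := by
  classical
  wlog hle : (G.adjMatrix ℝ *ᵥ x) j ≤ (G.adjMatrix ℝ *ᵥ x) i generalizing i j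
  · exact this hj hi hij.symm (fun h => hadj h.symm) (le_of_not_ge hle)
  set y := x + x j • (Pi.single i 1 - Pi.single j 1) with hy
  have hyi : y i = x i + x j := by simp [hy, hij]
  have hyj : y j = 0 := by simp [hy, hij.symm]
  have hyk : ∀ k, k ≠ i → k ≠ j → y k = x k := fun k hki hkj => by simp [hy, hki, hkj]
  refine ⟨y, ⟨fun k => ?_, ?_⟩, ?_, ?_⟩
  · by_cases hki : k = i
    · subst hki; rw [hyi]; exact add_nonneg (hx.1 _) (hx.1 _)
    by_cases hkj : k = j
    · subst hkj; rw [hyj]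
    rw [hyk k hki hkj]; exact hx.1 k
  · simp [hy, sum_add_distrib, ← mul_sum, sum_sub_distrib, hx.2]
  · refine LE.le.ssubset_of_not_superset (fun k hk => ?_) (fun h => h hj ?_)
    · by_cases hki : k = i
      · subst hki; exact hi
      by_cases hkj : k = j
      · subst hkj; exact absurd hyj hk
      rwa [Function.mem_support, hyk k hki hkj] at hk
    · exact hyj
  · rw [hy, quadForm_adjMatrix_add_smul_single_sub_single G x hadj]
    nlinarith [hx.1 j]

lemma exists_mem_stdSimplex_isClique_support_quadForm_le {x : V → ℝ} (hx : x ∈ stdSimplex ℝ V) :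
    ∃ y ∈ stdSimplex ℝ V, G.IsClique (Function.support y) ∧
      x ⬝ᵥ G.adjMatrix ℝ *ᵥ x ≤ y ⬝ᵥ G.adjMatrix ℝ *ᵥ y := by
  induction h : (Function.support x).ncard using Nat.strong_induction_on generalizing x with
  | _ N ih =>
  by_cases hcl : G.IsClique (Function.support x)
  · exact ⟨x, hx, hcl, le_rfl⟩
  obtain ⟨i, hi, j, hj, hij, hadj⟩ : ∃ i, x i ≠ 0 ∧ ∃ j, x j ≠ 0 ∧ i ≠ j ∧ ¬ G.Adj i j := by
    simpa [IsClique, Set.Pairwise] using hcl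
  obtain ⟨y, hy, hsupp, hle⟩ :=
    exists_mem_stdSimplex_support_ssubset_quadForm_le G hx hi hj hij hadj
  obtain ⟨z, hz, hzcl, hyz⟩ := ih _ (h ▸ Set.ncard_lt_ncard hsupp (Set.toFinite _)) hy rfl
  exact ⟨z, hz, hzcl, hle.trans hyz⟩

theorem quadForm_adjMatrix_le_one_sub_inv_cliqueNum {x : V → ℝ} (hx : x ∈ stdSimplex ℝ V) :
    x ⬝ᵥ G.adjMatrix ℝ *ᵥ x ≤ 1 - (G.cliqueNum : ℝ)⁻¹ := by
  obtain ⟨y, hy, hcl, hle⟩ := G.exists_mem_stdSimplex_isClique_support_quadForm_le hx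
  rw [quadForm_adjMatrix_of_isClique_support G y hcl, hy.2, one_pow] at hle
  linarith [G.inv_cliqueNum_le_sum_sq_of_isClique_support hy hcl]

variable {G}

lemma IsNClique.indicator_mem_stdSimplex_and_quadForm_eq {K : Finset V} {k : ℕ}
    (hK : G.IsNClique k K) (hk : 0 < k) :
    (K : Set V).indicator (fun _ => (k : ℝ)⁻¹) ∈ stdSimplex ℝ V ∧
      (K : Set V).indicator (fun _ => (k : ℝ)⁻¹) ⬝ᵥ G.adjMatrix ℝ *ᵥ
        (K : Set V).indicator (fun _ => (k : ℝ)⁻¹) = 1 - (k : ℝ)⁻¹ := by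
  classical
  set z := (K : Set V).indicator (fun _ => (k : ℝ)⁻¹)
  have hk' : (k : ℝ) ≠ 0 := by exact_mod_cast hk.ne'
  have hsum : ∑ i, z i = 1 := by
    simp [z, Set.indicator_apply, sum_ite_mem, hK.card_eq, hk']
  have hcl : G.IsClique (Function.support z) :=
    hK.isClique.subset Set.support_indicator_subset
  refine ⟨⟨fun i => Set.indicator_nonneg (fun _ _ => by positivity) i, hsum⟩, ?_⟩
  rw [quadForm_adjMatrix_of_isClique_support G z hcl, hsum]
  simp [z, Set.indicator_apply, sum_ite_mem, hK.card_eq]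
  field_simp

section EdgeEnumeration

variable {ι M : Type*} [Fintype ι] [AddCommMonoid M] {a b : ι → V}

lemma sum_add_sum_swap_eq_sum_adj (hab : ∀ k, G.Adj (a k) (b k))
    (hinj : Function.Injective fun k => s(a k, b k))
    (hsurj : ∀ e ∈ G.edgeFinset, ∃ k, s(a k, b k) = e) (f : V → V → M) :
    ∑ k, (f (a k) (b k) + f (b k) (a k)) = ∑ i, ∑ j, if G.Adj i j then f i j else 0 := by
  set φ : ι ⊕ ι → V × V := Sum.elim (fun k => (a k, b k)) fun k => (b k, a k)
  calc ∑ k, (f (a k) (b k) + f (b k) (a k)) = ∑ s, f (φ s).1 (φ s).2 := by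
        simp [φ, Fintype.sum_sum_type, sum_add_distrib]
    _ = ∑ p ∈ univ.filter fun p : V × V => G.Adj p.1 p.2, f p.1 p.2 := ?_
    _ = ∑ i, ∑ j, if G.Adj i j then f i j else 0 := by
        rw [sum_filter, Fintype.sum_prod_type]
  refine sum_bij (fun s _ => φ s) ?_ ?_ ?_ ?_
  · rintro (k | k) - <;> simp [φ, hab k, (hab k).symm]
  · have hne : ∀ k k', a k = b k' → b k = a k' → False := fun k k' h₁ h₂ => by
      obtain rfl : k = k' := hinj (by simp [h₁, h₂, Sym2.eq_swap])
      exact (hab k).ne h₁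
    rintro (k | k) - (k' | k') - h <;> simp only [φ, Sum.elim_inl, Sum.elim_inr, Prod.mk.injEq] at h
    · exact congrArg Sum.inl (hinj (by simp [h.1, h.2]))
    · exact (hne k k' h.1 h.2).elim
    · exact (hne k k' h.2 h.1).elim
    · exact congrArg Sum.inr (hinj (by simp [h.1, h.2]))
  · rintro ⟨i, j⟩ hij
    obtain ⟨k, hk⟩ := hsurj s(i, j) (by simpa using hij)
    rcases Sym2.eq_iff.1 hk with ⟨rfl, rfl⟩ | ⟨rfl, rfl⟩
    · exact ⟨Sum.inl k, mem_univ _, rfl⟩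
    · exact ⟨Sum.inr k, mem_univ _, rfl⟩
  · rintro (k | k) - <;> rfl

lemma two_mul_sum_mul_eq_quadForm_adjMatrix (hab : ∀ k, G.Adj (a k) (b k))
    (hinj : Function.Injective fun k => s(a k, b k))
    (hsurj : ∀ e ∈ G.edgeFinset, ∃ k, s(a k, b k) = e) (x : V → ℝ) :
    2 * ∑ k, x (a k) * x (b k) = x ⬝ᵥ G.adjMatrix ℝ *ᵥ x := by
  rw [dotProduct_mulVec_adjMatrix, ← sum_add_sum_swap_eq_sum_adj hab hinj hsurj, two_mul,
    ← sum_add_distrib]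
  simp only [mul_comm (x (b _))]

end EdgeEnumeration

end SimpleGraph

lemma dotProduct_le_sqrt_sum_sq {ι : Type*} [Fintype ι] (c w : ι → ℝ)
    (hw : ∑ i, w i ^ 2 = 1) : c ⬝ᵥ w ≤ √(∑ i, c i ^ 2) := by
  simpa [dotProduct, hw] using Real.sum_mul_le_sqrt_mul_sqrt univ c w

lemma exists_sum_sq_eq_one_dotProduct_eq_sqrt {ι : Type*} [Fintype ι] (c : ι → ℝ)
    (hc : 0 < ∑ i, c i ^ 2) : ∃ w : ι → ℝ, ∑ i, w i ^ 2 = 1 ∧ c ⬝ᵥ w = √(∑ i, c i ^ 2) := by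
  refine ⟨(√(∑ i, c i ^ 2))⁻¹ • c, ?_, ?_⟩
  · simp only [Pi.smul_apply, smul_eq_mul, mul_pow, ← mul_sum, inv_pow, Real.sq_sqrt hc.le]
    exact inv_mul_cancel₀ hc.ne'
  · have hcc : c ⬝ᵥ c = √(∑ i, c i ^ 2) ^ 2 := by
      rw [Real.sq_sqrt hc.le]; simp [dotProduct, sq]
    rw [dotProduct_smul, hcc, smul_eq_mul]
    field_simp

lemma dotProduct_half_single_add_half_single_mulVec {V : Type*} [Fintype V] [DecidableEq V]
    (u v : V → ℝ) (i j : V) :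
    u ⬝ᵥ ((1 / 2 : ℝ) • single i j 1 + (1 / 2 : ℝ) • single j i 1) *ᵥ v =
      (u i * v j + u j * v i) / 2 := by
  simp only [add_mulVec, smul_mulVec, single_mulVec_eq, dotProduct_add, dotProduct_smul,
    dotProduct_single, smul_eq_mul, one_mul, mul_one]
  ring

lemma sqrt_inv_add_one_sub_inv_compare_one {p q : ℕ} (hp : 0 < p) (hq : 0 < q) :
    (√((p : ℝ)⁻¹ + (1 - (q : ℝ)⁻¹)) = 1 ↔ p = q) ∧
      (1 < √((p : ℝ)⁻¹ + (1 - (q : ℝ)⁻¹)) ↔ p < q) ∧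
      (√((p : ℝ)⁻¹ + (1 - (q : ℝ)⁻¹)) < 1 ↔ q < p) := by
  have hp' : (0 : ℝ) < p := by exact_mod_cast hp
  have hq' : (0 : ℝ) < q := by exact_mod_cast hq
  refine ⟨?_, ?_, ?_⟩
  · rw [Real.sqrt_eq_one, add_sub_left_comm, add_eq_left, sub_eq_zero, _root_.inv_inj, Nat.cast_inj]
  · have h : (1 : ℝ) < (p : ℝ)⁻¹ + (1 - (q : ℝ)⁻¹) ↔ (q : ℝ)⁻¹ < (p : ℝ)⁻¹ := by
      constructor <;> intro h <;> linarith
    rw [Real.lt_sqrt zero_le_one, one_pow, h, inv_lt_inv₀ hq' hp', Nat.cast_lt]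
  · have h : (p : ℝ)⁻¹ + (1 - (q : ℝ)⁻¹) < 1 ↔ (p : ℝ)⁻¹ < (q : ℝ)⁻¹ := by
      constructor <;> intro h <;> linarith
    rw [Real.sqrt_lt' one_pos, one_pow, h, inv_lt_inv₀ hp' hq', Nat.cast_lt]

section TrilinearForm

variable {V ι : Type*} [Fintype V] [Fintype ι] [DecidableEq V]

noncomputable def trilinearCoeff (ℓ : ℕ) (E : ι → Matrix V V ℝ) (u v : V → ℝ) : Fin ℓ ⊕ ι ⊕ ι → ℝ :=
  Sum.elim (fun _ => u ⬝ᵥ ((ℓ : ℝ)⁻¹ • (1 : Matrix V V ℝ)) *ᵥ v)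
    (Sum.elim (fun k => u ⬝ᵥ E k *ᵥ v) fun k => u ⬝ᵥ E k *ᵥ v)

lemma trilinearCoeff_dotProduct (ℓ : ℕ) (E : ι → Matrix V V ℝ) (u v : V → ℝ)
    (w : Fin ℓ ⊕ ι ⊕ ι → ℝ) :
    trilinearCoeff ℓ E u v ⬝ᵥ w =
      (∑ i : Fin ℓ, (u ⬝ᵥ ((ℓ : ℝ)⁻¹ • (1 : Matrix V V ℝ)) *ᵥ v) * w (Sum.inl i)) +
        (∑ k, (u ⬝ᵥ E k *ᵥ v) * w (Sum.inr (Sum.inl k))) +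
        (∑ k, (u ⬝ᵥ E k *ᵥ v) * w (Sum.inr (Sum.inr k))) := by
  simp [trilinearCoeff, dotProduct, Fintype.sum_sum_type, add_assoc]

lemma sum_trilinearCoeff_sq (ℓ : ℕ) (E : ι → Matrix V V ℝ) (u v : V → ℝ) :
    ∑ j, trilinearCoeff ℓ E u v j ^ 2 = (u ⬝ᵥ v) ^ 2 / ℓ + 2 * ∑ k, (u ⬝ᵥ E k *ᵥ v) ^ 2 := by
  simp only [trilinearCoeff, Fintype.sum_sum_type, Sum.elim_inl, Sum.elim_inr, smul_mulVec,
    one_mulVec, dotProduct_smul, smul_eq_mul, sum_const, card_univ, Fintype.card_fin, nsmul_eq_mul]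
  rcases eq_or_ne (ℓ : ℝ) 0 with h | h
  · simp [h, two_mul]
  · field_simp; ring

variable {G : SimpleGraph V} [DecidableRel G.Adj] {a b : ι → V} {E : ι → Matrix V V ℝ}

lemma two_mul_sum_sq_dotProduct_mulVec_le (hab : ∀ k, G.Adj (a k) (b k))
    (hinj : Function.Injective fun k => s(a k, b k))
    (hsurj : ∀ e ∈ G.edgeFinset, ∃ k, s(a k, b k) = e)
    (hE : ∀ k, E k = (1 / 2 : ℝ) • single (a k) (b k) 1 + (1 / 2 : ℝ) • single (b k) (a k) 1)
    {u v : V → ℝ} (hu : ∑ i, u i ^ 2 = 1) (hv : ∑ i, v i ^ 2 = 1) :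
    2 * ∑ k, (u ⬝ᵥ E k *ᵥ v) ^ 2 ≤ 1 - (G.cliqueNum : ℝ)⁻¹ := by
  set x : V → ℝ := fun i => (u i ^ 2 + v i ^ 2) / 2
  have hx : x ∈ stdSimplex ℝ V :=
    ⟨fun i => by positivity, by simp [x, ← sum_div, sum_add_distrib, hu, hv]⟩
  have hterm : ∀ k, (u ⬝ᵥ E k *ᵥ v) ^ 2 ≤ x (a k) * x (b k) := fun k => by
    rw [hE, dotProduct_half_single_add_half_single_mulVec]
    simp only [x]
    nlinarith [sq_nonneg (u (a k) * u (b k) - v (a k) * v (b k))]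
  calc 2 * ∑ k, (u ⬝ᵥ E k *ᵥ v) ^ 2 ≤ 2 * ∑ k, x (a k) * x (b k) := by gcongr with k; exact hterm k
    _ = x ⬝ᵥ G.adjMatrix ℝ *ᵥ x := G.two_mul_sum_mul_eq_quadForm_adjMatrix hab hinj hsurj x
    _ ≤ 1 - (G.cliqueNum : ℝ)⁻¹ := G.quadForm_adjMatrix_le_one_sub_inv_cliqueNum hx

lemma exists_two_mul_sum_sq_dotProduct_mulVec_eq [Nonempty V] (hab : ∀ k, G.Adj (a k) (b k))
    (hinj : Function.Injective fun k => s(a k, b k))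
    (hsurj : ∀ e ∈ G.edgeFinset, ∃ k, s(a k, b k) = e)
    (hE : ∀ k, E k = (1 / 2 : ℝ) • single (a k) (b k) 1 + (1 / 2 : ℝ) • single (b k) (a k) 1) :
    ∃ u : V → ℝ, ∑ i, u i ^ 2 = 1 ∧
      2 * ∑ k, (u ⬝ᵥ E k *ᵥ u) ^ 2 = 1 - (G.cliqueNum : ℝ)⁻¹ := by
  obtain ⟨K, hK⟩ := G.exists_isNClique_cliqueNum
  obtain ⟨hz, hzA⟩ := hK.indicator_mem_stdSimplex_and_quadForm_eq G.one_le_cliqueNum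
  set z := (K : Set V).indicator fun _ => (G.cliqueNum : ℝ)⁻¹
  have hsq : ∀ i, √(z i) ^ 2 = z i := fun i => Real.sq_sqrt (hz.1 i)
  refine ⟨fun i => √(z i), by simp only [hsq, hz.2], ?_⟩
  have hterm : ∀ k, ((fun i => √(z i)) ⬝ᵥ E k *ᵥ fun i => √(z i)) ^ 2 = z (a k) * z (b k) := by
    intro k
    rw [hE, dotProduct_half_single_add_half_single_mulVec]
    linear_combination √(z (b k)) ^ 2 * hsq (a k) + z (a k) * hsq (b k)
  simp only [hterm, G.two_mul_sum_mul_eq_quadForm_adjMatrix hab hinj hsurj z, hzA]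

lemma sum_trilinearCoeff_sq_le (ℓ : ℕ) (hab : ∀ k, G.Adj (a k) (b k))
    (hinj : Function.Injective fun k => s(a k, b k))
    (hsurj : ∀ e ∈ G.edgeFinset, ∃ k, s(a k, b k) = e)
    (hE : ∀ k, E k = (1 / 2 : ℝ) • single (a k) (b k) 1 + (1 / 2 : ℝ) • single (b k) (a k) 1)
    {u v : V → ℝ} (hu : ∑ i, u i ^ 2 = 1) (hv : ∑ i, v i ^ 2 = 1) :
    ∑ j, trilinearCoeff ℓ E u v j ^ 2 ≤ (ℓ : ℝ)⁻¹ + (1 - (G.cliqueNum : ℝ)⁻¹) := by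
  have huv : (u ⬝ᵥ v) ^ 2 ≤ 1 := by
    simpa [dotProduct, hu, hv] using sum_mul_sq_le_sq_mul_sq univ u v
  rw [sum_trilinearCoeff_sq, div_eq_mul_inv]
  nlinarith [two_mul_sum_sq_dotProduct_mulVec_le hab hinj hsurj hE hu hv,
    inv_nonneg.2 (Nat.cast_nonneg ℓ : (0 : ℝ) ≤ ℓ)]

lemma exists_sum_trilinearCoeff_sq_eq [Nonempty V] (ℓ : ℕ) (hab : ∀ k, G.Adj (a k) (b k))
    (hinj : Function.Injective fun k => s(a k, b k))
    (hsurj : ∀ e ∈ G.edgeFinset, ∃ k, s(a k, b k) = e)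
    (hE : ∀ k, E k = (1 / 2 : ℝ) • single (a k) (b k) 1 + (1 / 2 : ℝ) • single (b k) (a k) 1) :
    ∃ u : V → ℝ, ∑ i, u i ^ 2 = 1 ∧
      ∑ j, trilinearCoeff ℓ E u u j ^ 2 = (ℓ : ℝ)⁻¹ + (1 - (G.cliqueNum : ℝ)⁻¹) := by
  obtain ⟨u, hu, huE⟩ := exists_two_mul_sum_sq_dotProduct_mulVec_eq hab hinj hsurj hE
  have huu : u ⬝ᵥ u = 1 := by simpa [dotProduct, sq] using hu
  refine ⟨u, hu, ?_⟩
  rw [sum_trilinearCoeff_sq, huE, huu]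
  ring

end TrilinearForm

/-- the maximum `T_ℓ` of the trilinear form satisfies
`T_ℓ = 1 ↔ ℓ = ω`, `T_ℓ > 1 ↔ ℓ < ω` and `T_ℓ < 1 ↔ ℓ > ω`, where `ω` is the
clique number of `G`. -/
theorem stmt_9 (n m : ℕ) (hn : 1 ≤ n) (G : SimpleGraph (Fin n)) [DecidableRel G.Adj]
    (a b : Fin m → Fin n)
    (hab : ∀ k, G.Adj (a k) (b k))
    (hinj : Function.Injective fun k => s(a k, b k))
    (hsurj : ∀ e ∈ G.edgeFinset, ∃ k, s(a k, b k) = e)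
    (E : Fin m → Matrix (Fin n) (Fin n) ℝ)
    (hE : ∀ k, E k = (1/2 : ℝ) • Matrix.single (a k) (b k) 1
                   + (1/2 : ℝ) • Matrix.single (b k) (a k) 1)
    (ℓ : ℕ) (hℓ : 0 < ℓ) :
    ∃ T : ℝ,
      IsGreatest
        {y : ℝ | ∃ (u v : Fin n → ℝ) (w : Fin ℓ ⊕ Fin m ⊕ Fin m → ℝ),
          (∑ i, u i ^ 2) = 1 ∧ (∑ i, v i ^ 2) = 1 ∧ (∑ i, w i ^ 2) = 1 ∧
          y = (∑ i : Fin ℓ,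
                (u ⬝ᵥ ((ℓ : ℝ)⁻¹ • (1 : Matrix (Fin n) (Fin n) ℝ)).mulVec v)
                  * w (Sum.inl i))
            + (∑ k, (u ⬝ᵥ (E k).mulVec v) * w (Sum.inr (Sum.inl k)))
            + (∑ k, (u ⬝ᵥ (E k).mulVec v) * w (Sum.inr (Sum.inr k)))} T ∧
      (T = 1 ↔ ℓ = G.cliqueNum) ∧
      (1 < T ↔ ℓ < G.cliqueNum) ∧
      (T < 1 ↔ G.cliqueNum < ℓ) := by
  have : Nonempty (Fin n) := ⟨⟨0, hn⟩⟩
  refine ⟨√((ℓ : ℝ)⁻¹ + (1 - (G.cliqueNum : ℝ)⁻¹)), ⟨?_, ?_⟩,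
    sqrt_inv_add_one_sub_inv_compare_one hℓ G.one_le_cliqueNum⟩
  · obtain ⟨u, hu, hR⟩ := exists_sum_trilinearCoeff_sq_eq ℓ hab hinj hsurj hE
    have hRpos : 0 < ∑ j, trilinearCoeff ℓ E u u j ^ 2 := by
      have hω : (G.cliqueNum : ℝ)⁻¹ ≤ 1 :=
        inv_le_one_of_one_le₀ (by exact_mod_cast G.one_le_cliqueNum)
      have hℓ' : (0 : ℝ) < (ℓ : ℝ)⁻¹ := by positivity
      linarith
    obtain ⟨w, hw, huw⟩ := exists_sum_sq_eq_one_dotProduct_eq_sqrt _ hRpos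
    exact ⟨u, u, w, hu, hu, hw, by rw [← trilinearCoeff_dotProduct, huw, hR]⟩
  · rintro y ⟨u, v, w, hu, hv, hw, rfl⟩
    rw [← trilinearCoeff_dotProduct]
    exact (dotProduct_le_sqrt_sum_sq _ _ hw).trans
      (Real.sqrt_le_sqrt (sum_trilinearCoeff_sq_le ℓ hab hinj hsurj hE hu hv))
end

section
/- Let A_1,…,A_n be arbitrary real n×n matrices, and define B_1 = C_1 = E_{11} and B_i = C_i = E_{1i} − E_{i1} for i = 2,…,n. Consider the system S: v^T A_i w = 0 (i = 1,…,n), u^T B_j w = 0 (j = 1,…,n), u^T C_k v = 0 (k = 1,…,n). If (u, v, w) ∈ ℝ^n × ℝ^n × ℝ^n is a solution of S with u ≠ 0, v ≠ 0 and w ≠ 0, then u_1 = 0, v_1 = 0, and moreover w_1 = 0. -/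
/-!
The equations with `B_j` say `u_1 w_1 = 0` and `u_1 w_i = u_i w_1` for `i ≥ 2`, and those with
`C_k` say `u_1 v_i = u_i v_1`. If `u_1 ≠ 0` the first two force `w_1 = 0` and then `w = 0`;
so `u_1 = 0`, and since some `u_i ≠ 0` the cross relations give `w_1 = v_1 = 0`.
-/

open Matrix

section SingleBilinear

variable {R : Type*} [CommRing R] {n : Type*} [Fintype n] [DecidableEq n]

theorem dotProduct_single_one_mulVec (u w : n → R) (i j : n) :
    u ⬝ᵥ single i j 1 *ᵥ w = u i * w j := by
  rw [single_mulVec_eq, dotProduct_smul, dotProduct_single, one_mul, mul_one, smul_eq_mul,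
    mul_comm]

theorem dotProduct_single_sub_single_mulVec (u w : n → R) (i j : n) :
    u ⬝ᵥ (single i j 1 - single j i 1) *ᵥ w = u i * w j - u j * w i := by
  rw [sub_mulVec, dotProduct_sub, dotProduct_single_one_mulVec, dotProduct_single_one_mulVec]

end SingleBilinear

section CrossRelation

variable {ι R : Type*} [MulZeroClass R] [NoZeroDivisors R] {x y : ι → R} {i₀ : ι}

theorem apply_eq_zero_of_cross_eq (h : ∀ i ≠ i₀, x i₀ * y i = x i * y i₀)
    (hx : x ≠ 0) (hx₀ : x i₀ = 0) : y i₀ = 0 := by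
  obtain ⟨i, hi⟩ := Function.ne_iff.mp hx
  have hii₀ : i ≠ i₀ := by rintro rfl; exact hi hx₀
  have := h i hii₀
  rw [hx₀, zero_mul, eq_comm, mul_eq_zero] at this
  exact this.resolve_left hi

theorem eq_zero_of_cross_eq (h : ∀ i ≠ i₀, x i₀ * y i = x i * y i₀)
    (hx₀ : x i₀ ≠ 0) (hy₀ : y i₀ = 0) : y = 0 := by
  funext i
  rcases eq_or_ne i i₀ with rfl | hi
  · exact hy₀
  · have := h i hi
    rw [hy₀, mul_zero, mul_eq_zero] at this
    exact this.resolve_left hx₀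

end CrossRelation

theorem stmt_10_general (n : ℕ) [NeZero n]
    (B C : Fin n → Matrix (Fin n) (Fin n) ℝ)
    (hB0 : B 0 = Matrix.single 0 0 1)
    (hBi : ∀ i : Fin n, i ≠ 0 →
      B i = Matrix.single 0 i 1 - Matrix.single i 0 1)
    (hCi : ∀ i : Fin n, i ≠ 0 →
      C i = Matrix.single 0 i 1 - Matrix.single i 0 1)
    (u v w : Fin n → ℝ) (hu : u ≠ 0) (hw : w ≠ 0)
    (h2 : ∀ j, u ⬝ᵥ (B j).mulVec w = 0)
    (h3 : ∀ k, u ⬝ᵥ (C k).mulVec v = 0) :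
    u 0 = 0 ∧ v 0 = 0 ∧ w 0 = 0 := by
  have huw₀ : u 0 * w 0 = 0 := by
    simpa only [hB0, dotProduct_single_one_mulVec] using h2 0
  have huw : ∀ i ≠ 0, u 0 * w i = u i * w 0 := fun i hi => sub_eq_zero.mp <| by
    simpa only [hBi i hi, dotProduct_single_sub_single_mulVec] using h2 i
  have huv : ∀ i ≠ 0, u 0 * v i = u i * v 0 := fun i hi => sub_eq_zero.mp <| by
    simpa only [hCi i hi, dotProduct_single_sub_single_mulVec] using h3 i
  have hu₀ : u 0 = 0 := by
    by_contra hu₀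
    exact hw (eq_zero_of_cross_eq huw hu₀ ((mul_eq_zero.mp huw₀).resolve_left hu₀))
  exact ⟨hu₀, apply_eq_zero_of_cross_eq huv hu hu₀, apply_eq_zero_of_cross_eq huw hu hu₀⟩

/-- Claim 1: any solution of the system `S` (with
`B_1 = C_1 = E_{11}` and `B_i = C_i = E_{1i} − E_{i1}` for `i ≥ 2`) with
`u, v, w` all nonzero has `u_1 = v_1 = w_1 = 0`. -/
theorem stmt_10 (n : ℕ) [NeZero n] (A : Fin n → Matrix (Fin n) (Fin n) ℝ)
    (B C : Fin n → Matrix (Fin n) (Fin n) ℝ)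
    (hB0 : B 0 = Matrix.single 0 0 1)
    (hBi : ∀ i : Fin n, i ≠ 0 →
      B i = Matrix.single 0 i 1 - Matrix.single i 0 1)
    (hC0 : C 0 = Matrix.single 0 0 1)
    (hCi : ∀ i : Fin n, i ≠ 0 →
      C i = Matrix.single 0 i 1 - Matrix.single i 0 1)
    (u v w : Fin n → ℝ) (hu : u ≠ 0) (hv : v ≠ 0) (hw : w ≠ 0)
    (h1 : ∀ i, v ⬝ᵥ (A i).mulVec w = 0)
    (h2 : ∀ j, u ⬝ᵥ (B j).mulVec w = 0)
    (h3 : ∀ k, u ⬝ᵥ (C k).mulVec v = 0) :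
    u 0 = 0 ∧ v 0 = 0 ∧ w 0 = 0 :=
  stmt_10_general n B C hB0 hBi hCi u v w hu hw h2 h3
end

section
/- Let 𝒜 = ⟦a_{ijk}⟧ ∈ ℝ^{l×m×n} be a real 3-tensor with first-index slices A_i(j,k) = a_{ijk} ∈ ℝ^{m×n}, i = 1,…,l. Define ℬ = ⟦b_{ijk}⟧ ∈ ℝ^{2l×2m×2n} by its first-index slices: B_i = [[A_i, 0],[0, −A_i]] and B_{l+i} = [[0, A_i],[A_i, 0]] for i = 1,…,l (block matrices of size 2m×2n). Then the tensor quadratic feasibility system for ℬ has a solution (u,v,w) ∈ ℝ^{2l} × ℝ^{2m} × ℝ^{2n} with u, v, w all nonzero if and only if the tensor quadratic feasibility system for 𝒜 has a solution (u,v,w) ∈ ℂ^l × ℂ^m × ℂ^n with u, v, w all nonzero. -/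
open Matrix

lemma key {ι κ : Type*} [Fintype ι] [Fintype κ] (c : ι → κ → ℝ) (x1 x2 : ι → ℝ) (y1 y2 : κ → ℝ) :
  (∑ i, ∑ k, (c i k : ℂ) * (x1 i + x2 i * Complex.I) * (y1 k + y2 k * Complex.I) = 0) ↔
  ((∑ i, ∑ k, c i k * (x1 i * y1 k - x2 i * y2 k) = 0) ∧ (∑ i, ∑ k, c i k * (x1 i * y2 k + x2 i * y1 k) = 0)) := by
  have hre : (∑ i, ∑ k, (c i k : ℂ) * (x1 i + x2 i * Complex.I) * (y1 k + y2 k * Complex.I)).re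
      = ∑ i, ∑ k, c i k * (x1 i * y1 k - x2 i * y2 k) := by
    rw [Complex.re_sum]
    refine Finset.sum_congr rfl fun i _ => ?_
    rw [Complex.re_sum]
    refine Finset.sum_congr rfl fun k _ => ?_
    simp [Complex.mul_re, Complex.mul_im]
    ring
  have him : (∑ i, ∑ k, (c i k : ℂ) * (x1 i + x2 i * Complex.I) * (y1 k + y2 k * Complex.I)).im
      = ∑ i, ∑ k, c i k * (x1 i * y2 k + x2 i * y1 k) := by
    rw [Complex.im_sum]
    refine Finset.sum_congr rfl fun i _ => ?_
    rw [Complex.im_sum]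
    refine Finset.sum_congr rfl fun k _ => ?_
    simp [Complex.mul_re, Complex.mul_im]
    ring
  rw [Complex.ext_iff, hre, him, Complex.zero_re, Complex.zero_im]

lemma expand4 {α β : Type*} [Fintype α] [Fintype β] (f : α ⊕ α → β ⊕ β → ℝ) :
  ∑ x, ∑ y, f x y = ∑ x : α, ∑ y : β,
    (f (.inl x) (.inl y) + f (.inl x) (.inr y) + f (.inr x) (.inl y) + f (.inr x) (.inr y)) := by
  rw [Fintype.sum_sum_type]
  simp only [Fintype.sum_sum_type, ← Finset.sum_add_distrib]
  refine Finset.sum_congr rfl fun x _ => Finset.sum_congr rfl fun y _ => by ring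

lemma transfer {ι κ : Type*} [Fintype ι] [Fintype κ] {f g : ι → κ → ℝ} (c : ℝ)
    (h : ∑ i, ∑ k, f i k = 0) (hfg : ∀ i k, g i k = c * f i k) :
    ∑ i, ∑ k, g i k = 0 := by
  have e : ∑ i, ∑ k, g i k = c * ∑ i, ∑ k, f i k := by
    rw [Finset.mul_sum]
    refine Finset.sum_congr rfl fun i _ => ?_
    rw [Finset.mul_sum]
    exact Finset.sum_congr rfl fun k _ => hfg i k
  rw [e, h, mul_zero]

/-- real tensor quadratic feasibility for the doubled tensor `ℬ`
(with first-index slices `[[Aᵢ, 0],[0, −Aᵢ]]` and `[[0, Aᵢ],[Aᵢ, 0]]`) is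
equivalent to complex tensor quadratic feasibility for `𝒜`. -/
theorem stmt_12 (l m n : ℕ) (a : Fin l → Fin m → Fin n → ℝ)
    (b : (Fin l ⊕ Fin l) → (Fin m ⊕ Fin m) → (Fin n ⊕ Fin n) → ℝ)
    (hb : ∀ (i : Fin l) (j : Fin m ⊕ Fin m) (k : Fin n ⊕ Fin n),
      b (Sum.inl i) j k
        = Matrix.fromBlocks (Matrix.of (a i)) 0 0 (-(Matrix.of (a i))) j k ∧
      b (Sum.inr i) j k
        = Matrix.fromBlocks 0 (Matrix.of (a i)) (Matrix.of (a i)) 0 j k) :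
    (∃ (u : Fin l ⊕ Fin l → ℝ) (v : Fin m ⊕ Fin m → ℝ) (w : Fin n ⊕ Fin n → ℝ),
      u ≠ 0 ∧ v ≠ 0 ∧ w ≠ 0 ∧
      (∀ i, ∑ j, ∑ k, b i j k * v j * w k = 0) ∧
      (∀ j, ∑ i, ∑ k, b i j k * u i * w k = 0) ∧
      (∀ k, ∑ i, ∑ j, b i j k * u i * v j = 0)) ↔
    (∃ (u : Fin l → ℂ) (v : Fin m → ℂ) (w : Fin n → ℂ),
      u ≠ 0 ∧ v ≠ 0 ∧ w ≠ 0 ∧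
      (∀ i, ∑ j, ∑ k, (a i j k : ℂ) * v j * w k = 0) ∧
      (∀ j, ∑ i, ∑ k, (a i j k : ℂ) * u i * w k = 0) ∧
      (∀ k, ∑ i, ∑ j, (a i j k : ℂ) * u i * v j = 0)) := by
  have h111 : ∀ i j k, b (Sum.inl i) (Sum.inl j) (Sum.inl k) = a i j k := fun i j k => by
    simpa using (hb i (Sum.inl j) (Sum.inl k)).1
  have h112 : ∀ i j k, b (Sum.inl i) (Sum.inl j) (Sum.inr k) = 0 := fun i j k => by
    simpa using (hb i (Sum.inl j) (Sum.inr k)).1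
  have h121 : ∀ i j k, b (Sum.inl i) (Sum.inr j) (Sum.inl k) = 0 := fun i j k => by
    simpa using (hb i (Sum.inr j) (Sum.inl k)).1
  have h122 : ∀ i j k, b (Sum.inl i) (Sum.inr j) (Sum.inr k) = -a i j k := fun i j k => by
    simpa using (hb i (Sum.inr j) (Sum.inr k)).1
  have h211 : ∀ i j k, b (Sum.inr i) (Sum.inl j) (Sum.inl k) = 0 := fun i j k => by
    simpa using (hb i (Sum.inl j) (Sum.inl k)).2
  have h212 : ∀ i j k, b (Sum.inr i) (Sum.inl j) (Sum.inr k) = a i j k := fun i j k => by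
    simpa using (hb i (Sum.inl j) (Sum.inr k)).2
  have h221 : ∀ i j k, b (Sum.inr i) (Sum.inr j) (Sum.inl k) = a i j k := fun i j k => by
    simpa using (hb i (Sum.inr j) (Sum.inl k)).2
  have h222 : ∀ i j k, b (Sum.inr i) (Sum.inr j) (Sum.inr k) = 0 := fun i j k => by
    simpa using (hb i (Sum.inr j) (Sum.inr k)).2
  have E1L : ∀ (p : Fin m ⊕ Fin m → ℝ) (q : Fin n ⊕ Fin n → ℝ) (i : Fin l),
      ∑ j, ∑ k, b (Sum.inl i) j k * p j * q k
        = ∑ j, ∑ k, a i j k * (p (Sum.inl j) * q (Sum.inl k) - p (Sum.inr j) * q (Sum.inr k)) := by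
    intro p q i
    refine Eq.trans (expand4 (fun j k => b (Sum.inl i) j k * p j * q k)) ?_
    exact Finset.sum_congr rfl fun j _ => Finset.sum_congr rfl fun k _ => by
      simp only [h111, h112, h121, h122]; ring
  have E1R : ∀ (p : Fin m ⊕ Fin m → ℝ) (q : Fin n ⊕ Fin n → ℝ) (i : Fin l),
      ∑ j, ∑ k, b (Sum.inr i) j k * p j * q k
        = ∑ j, ∑ k, a i j k * (p (Sum.inl j) * q (Sum.inr k) + p (Sum.inr j) * q (Sum.inl k)) := by
    intro p q i
    refine Eq.trans (expand4 (fun j k => b (Sum.inr i) j k * p j * q k)) ?_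
    exact Finset.sum_congr rfl fun j _ => Finset.sum_congr rfl fun k _ => by
      simp only [h211, h212, h221, h222]; ring
  have E2L : ∀ (p : Fin l ⊕ Fin l → ℝ) (q : Fin n ⊕ Fin n → ℝ) (j : Fin m),
      ∑ i, ∑ k, b i (Sum.inl j) k * p i * q k
        = ∑ i, ∑ k, a i j k * (p (Sum.inl i) * q (Sum.inl k) + p (Sum.inr i) * q (Sum.inr k)) := by
    intro p q j
    refine Eq.trans (expand4 (fun i k => b i (Sum.inl j) k * p i * q k)) ?_
    exact Finset.sum_congr rfl fun i _ => Finset.sum_congr rfl fun k _ => by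
      simp only [h111, h112, h211, h212]; ring
  have E2R : ∀ (p : Fin l ⊕ Fin l → ℝ) (q : Fin n ⊕ Fin n → ℝ) (j : Fin m),
      ∑ i, ∑ k, b i (Sum.inr j) k * p i * q k
        = ∑ i, ∑ k, a i j k * (p (Sum.inr i) * q (Sum.inl k) - p (Sum.inl i) * q (Sum.inr k)) := by
    intro p q j
    refine Eq.trans (expand4 (fun i k => b i (Sum.inr j) k * p i * q k)) ?_
    exact Finset.sum_congr rfl fun i _ => Finset.sum_congr rfl fun k _ => by
      simp only [h121, h122, h221, h222]; ring
  have E3L : ∀ (p : Fin l ⊕ Fin l → ℝ) (q : Fin m ⊕ Fin m → ℝ) (k : Fin n),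
      ∑ i, ∑ j, b i j (Sum.inl k) * p i * q j
        = ∑ i, ∑ j, a i j k * (p (Sum.inl i) * q (Sum.inl j) + p (Sum.inr i) * q (Sum.inr j)) := by
    intro p q k
    refine Eq.trans (expand4 (fun i j => b i j (Sum.inl k) * p i * q j)) ?_
    exact Finset.sum_congr rfl fun i _ => Finset.sum_congr rfl fun j _ => by
      simp only [h111, h121, h211, h221]; ring
  have E3R : ∀ (p : Fin l ⊕ Fin l → ℝ) (q : Fin m ⊕ Fin m → ℝ) (k : Fin n),
      ∑ i, ∑ j, b i j (Sum.inr k) * p i * q j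
        = ∑ i, ∑ j, a i j k * (p (Sum.inr i) * q (Sum.inl j) - p (Sum.inl i) * q (Sum.inr j)) := by
    intro p q k
    refine Eq.trans (expand4 (fun i j => b i j (Sum.inr k) * p i * q j)) ?_
    exact Finset.sum_congr rfl fun i _ => Finset.sum_congr rfl fun j _ => by
      simp only [h112, h122, h212, h222]; ring
  constructor
  · rintro ⟨u, v, w, hu, hv, hw, f1, f2, f3⟩
    refine ⟨fun i => ((u (Sum.inl i) : ℝ) : ℂ) + ((-(u (Sum.inr i)) : ℝ) : ℂ) * Complex.I,
            fun j => ((v (Sum.inl j) : ℝ) : ℂ) + ((v (Sum.inr j) : ℝ) : ℂ) * Complex.I,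
            fun k => ((w (Sum.inl k) : ℝ) : ℂ) + ((w (Sum.inr k) : ℝ) : ℂ) * Complex.I,
            ?_, ?_, ?_, ?_, ?_, ?_⟩
    · intro h0
      apply hu
      funext x
      have hz : ∀ i, u (Sum.inl i) = 0 ∧ u (Sum.inr i) = 0 := fun i => by
        simpa [Complex.ext_iff, neg_eq_zero] using congrFun h0 i
      cases x with
      | inl i => simpa using (hz i).1
      | inr i => simpa using (hz i).2
    · intro h0
      apply hv
      funext x
      have hz : ∀ j, v (Sum.inl j) = 0 ∧ v (Sum.inr j) = 0 := fun j => by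
        simpa [Complex.ext_iff] using congrFun h0 j
      cases x with
      | inl j => simpa using (hz j).1
      | inr j => simpa using (hz j).2
    · intro h0
      apply hw
      funext x
      have hz : ∀ k, w (Sum.inl k) = 0 ∧ w (Sum.inr k) = 0 := fun k => by
        simpa [Complex.ext_iff] using congrFun h0 k
      cases x with
      | inl k => simpa using (hz k).1
      | inr k => simpa using (hz k).2
    · intro i
      refine (key (fun j k => a i j k) (fun j => v (Sum.inl j)) (fun j => v (Sum.inr j))
        (fun k => w (Sum.inl k)) (fun k => w (Sum.inr k))).mpr ⟨?_, ?_⟩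
      · have h := f1 (Sum.inl i); rw [E1L v w i] at h
        exact transfer 1 h (fun j k => by ring)
      · have h := f1 (Sum.inr i); rw [E1R v w i] at h
        exact transfer 1 h (fun j k => by ring)
    · intro j
      refine (key (fun i k => a i j k) (fun i => u (Sum.inl i)) (fun i => -(u (Sum.inr i)))
        (fun k => w (Sum.inl k)) (fun k => w (Sum.inr k))).mpr ⟨?_, ?_⟩
      · have h := f2 (Sum.inl j); rw [E2L u w j] at h
        exact transfer 1 h (fun i k => by ring)
      · have h := f2 (Sum.inr j); rw [E2R u w j] at h
        exact transfer (-1) h (fun i k => by ring)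
    · intro k
      refine (key (fun i j => a i j k) (fun i => u (Sum.inl i)) (fun i => -(u (Sum.inr i)))
        (fun j => v (Sum.inl j)) (fun j => v (Sum.inr j))).mpr ⟨?_, ?_⟩
      · have h := f3 (Sum.inl k); rw [E3L u v k] at h
        exact transfer 1 h (fun i j => by ring)
      · have h := f3 (Sum.inr k); rw [E3R u v k] at h
        exact transfer (-1) h (fun i j => by ring)
  · rintro ⟨u, v, w, hu, hv, hw, f1, f2, f3⟩
    refine ⟨Sum.elim (fun i => (u i).re) (fun i => -((u i).im)),
            Sum.elim (fun j => (v j).re) (fun j => (v j).im),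
            Sum.elim (fun k => (w k).re) (fun k => (w k).im),
            ?_, ?_, ?_, ?_, ?_, ?_⟩
    · intro h0
      apply hu
      funext i
      exact Complex.ext (by simpa using congrFun h0 (Sum.inl i))
        (by simpa [neg_eq_zero] using congrFun h0 (Sum.inr i))
    · intro h0
      apply hv
      funext j
      exact Complex.ext (by simpa using congrFun h0 (Sum.inl j))
        (by simpa using congrFun h0 (Sum.inr j))
    · intro h0
      apply hw
      funext k
      exact Complex.ext (by simpa using congrFun h0 (Sum.inl k))
        (by simpa using congrFun h0 (Sum.inr k))
    · rintro (i | i)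
      · obtain ⟨hA, hB⟩ := (key (fun j k => a i j k) (fun j => (v j).re) (fun j => (v j).im)
          (fun k => (w k).re) (fun k => (w k).im)).mp
          (by simp only [Complex.re_add_im]; exact f1 i)
        rw [E1L]
        exact transfer 1 hA (fun j k => by simp only [Sum.elim_inl, Sum.elim_inr]; ring)
      · obtain ⟨hA, hB⟩ := (key (fun j k => a i j k) (fun j => (v j).re) (fun j => (v j).im)
          (fun k => (w k).re) (fun k => (w k).im)).mp
          (by simp only [Complex.re_add_im]; exact f1 i)
        rw [E1R]
        exact transfer 1 hB (fun j k => by simp only [Sum.elim_inl, Sum.elim_inr]; ring)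
    · rintro (j | j)
      · obtain ⟨hA, hB⟩ := (key (fun i k => a i j k) (fun i => (u i).re) (fun i => (u i).im)
          (fun k => (w k).re) (fun k => (w k).im)).mp
          (by simp only [Complex.re_add_im]; exact f2 j)
        rw [E2L]
        exact transfer 1 hA (fun i k => by simp only [Sum.elim_inl, Sum.elim_inr]; ring)
      · obtain ⟨hA, hB⟩ := (key (fun i k => a i j k) (fun i => (u i).re) (fun i => (u i).im)
          (fun k => (w k).re) (fun k => (w k).im)).mp
          (by simp only [Complex.re_add_im]; exact f2 j)
        rw [E2R]
        exact transfer (-1) hB (fun i k => by simp only [Sum.elim_inl, Sum.elim_inr]; ring)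
    · rintro (k | k)
      · obtain ⟨hA, hB⟩ := (key (fun i j => a i j k) (fun i => (u i).re) (fun i => (u i).im)
          (fun j => (v j).re) (fun j => (v j).im)).mp
          (by simp only [Complex.re_add_im]; exact f3 k)
        rw [E3L]
        exact transfer 1 hA (fun i j => by simp only [Sum.elim_inl, Sum.elim_inr]; ring)
      · obtain ⟨hA, hB⟩ := (key (fun i j => a i j k) (fun i => (u i).re) (fun i => (u i).im)
          (fun j => (v j).re) (fun j => (v j).im)).mp
          (by simp only [Complex.re_add_im]; exact f3 k)
        rw [E3R]
        exact transfer (-1) hB (fun i j => by simp only [Sum.elim_inl, Sum.elim_inr]; ring)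
end

section
/- Let x_i, y_i ∈ ℝ^m (i = 1,2,3) be such that x_i and y_i are linearly independent for each i, and set A := x_1⊗x_2⊗y_3 + x_1⊗y_2⊗x_3 + y_1⊗x_2⊗x_3 ∈ ℝ^{m×m×m}. Then rank(A) = 3. Conversely, if for some i the pair x_i, y_i is linearly dependent (and A ≠ 0), then rank(A) ≤ 2; i.e., rank(A) = 3 if and only if x_i, y_i are linearly independent for i = 1,2,3. -/
/-!
Contracting the third index of `A` with functionals dual to `(y₂, x₂)` and `(x₂, y₂)` gives the
matrices `P = x₀ ⊗ x₁` and `Q = x₀ ⊗ y₁ + y₀ ⊗ x₁`. A decomposition of length two would put `P`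
and `Q` in the span of two rank-one matrices `R₀, R₁`; inverting the `2 × 2` coefficient matrix
then puts multiples `d • Rₐ` in the pencil `s P + t Q`. Applying functionals dual to `(x₀, y₀)`
to the columns of a rank-one member of the pencil shows that it must have `t = 0`, which forces
`P = 0`. If instead one pair `xᵢ, yᵢ` is dependent, both vectors are multiples of one `w`, and
the three terms of `A` merge into two.
-/

/-- The rank of a 3-tensor `A ∈ ℝ^{l×m×n}`: the least `r` such that `A` is a sum
of `r` scaled outer products `λ_α x_α ⊗ y_α ⊗ z_α`. -/
noncomputable def tensorRank {l m n : ℕ} (A : Fin l → Fin m → Fin n → ℝ) : ℕ :=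
  sInf {r : ℕ | ∃ (lam : Fin r → ℝ) (x : Fin r → Fin l → ℝ)
    (y : Fin r → Fin m → ℝ) (z : Fin r → Fin n → ℝ),
    ∀ i j k, A i j k = ∑ α, lam α * (x α i * y α j * z α k)}

open Module

section PairIndependence

variable {K V : Type*} [Field K] [AddCommGroup V] [Module K V] {u v : V}

theorem LinearIndependent.exists_dual_pair (h : LinearIndependent K ![u, v]) :
    ∃ f : Dual K V, f u = 1 ∧ f v = 0 := by
  obtain ⟨f, hf⟩ := LinearMap.exists_extend ((Basis.span h).coord 0)
  have hcoord (i : Fin 2) : f (![u, v] i) = if i = 0 then 1 else 0 := by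
    have := LinearMap.congr_fun hf (Basis.span h i)
    rw [Basis.coord_apply, Basis.repr_self, Finsupp.single_apply] at this
    simpa [Basis.span_apply, eq_comm] using this
  exact ⟨f, hcoord 0, hcoord 1⟩

theorem exists_eq_smul_of_not_linearIndependent_pair (h : ¬ LinearIndependent K ![u, v]) :
    ∃ (w : V) (a b : K), u = a • w ∧ v = b • w := by
  by_cases hu : u = 0
  · exact ⟨v, 0, 1, by simp [hu], by simp⟩
  · obtain ⟨a, rfl⟩ : ∃ a : K, a • u = v := by simpa [LinearIndependent.pair_iff' hu] using h
    exact ⟨u, 1, a, by simp, rfl⟩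

end PairIndependence

section Pencil

variable {K ι κ : Type*} [Field K] {x₀ y₀ : ι → K} {x₁ y₁ : κ → K}

theorem eq_zero_of_mul_eq_pencil (h₀ : LinearIndependent K ![x₀, y₀])
    (h₁ : LinearIndependent K ![x₁, y₁]) {u : ι → K} {v : κ → K} {s t : K}
    (h : ∀ i j, u i * v j = s * (x₀ i * x₁ j) + t * (x₀ i * y₁ j + y₀ i * x₁ j)) : t = 0 := by
  obtain ⟨f, hfx, hfy⟩ := h₀.exists_dual_pair
  obtain ⟨g, hgy, hgx⟩ := (LinearIndependent.pair_symm_iff.mp h₀).exists_dual_pair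
  have column (j : κ) : v j • u = (s * x₁ j + t * y₁ j) • x₀ + (t * x₁ j) • y₀ := by
    ext i
    simp only [Pi.smul_apply, Pi.add_apply, smul_eq_mul]
    linear_combination h i j
  have hf (j : κ) : f u * v j = s * x₁ j + t * y₁ j := by
    simpa [hfx, hfy, mul_comm] using congrArg f (column j)
  have hg (j : κ) : g u * v j = t * x₁ j := by
    simpa [hgx, hgy, mul_comm] using congrArg g (column j)
  have hrel : (g u * s - f u * t) • x₁ + (g u * t) • y₁ = 0 := by
    ext j
    simp only [Pi.smul_apply, Pi.add_apply, smul_eq_mul, Pi.zero_apply]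
    linear_combination f u * hg j - g u * hf j
  rcases mul_eq_zero.mp (LinearIndependent.pair_iff.mp h₁ _ _ hrel).2 with hgu | ht
  · have : t • x₁ = 0 := by
      ext j
      simpa [hgu] using (hg j).symm
    exact (smul_eq_zero.mp this).resolve_right (by simpa using h₁.ne_zero 0)
  · exact ht

theorem false_of_pencil_mem_span_two_rankOne (h₀ : LinearIndependent K ![x₀, y₀])
    (h₁ : LinearIndependent K ![x₁, y₁]) {X₀ X₁ : ι → K} {Y₀ Y₁ : κ → K} {μ₀ μ₁ ν₀ ν₁ : K}
    (hP : ∀ i j, x₀ i * x₁ j = μ₀ * (X₀ i * Y₀ j) + μ₁ * (X₁ i * Y₁ j))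
    (hQ : ∀ i j, x₀ i * y₁ j + y₀ i * x₁ j = ν₀ * (X₀ i * Y₀ j) + ν₁ * (X₁ i * Y₁ j)) :
    False := by
  set d := μ₀ * ν₁ - μ₁ * ν₀
  -- Cramer's rule puts `d • Xₐ ⊗ Yₐ` in the pencil, with `Q`-coefficients `-μ₁` and `μ₀`.
  have hμ₁ : -μ₁ = 0 := eq_zero_of_mul_eq_pencil h₀ h₁ (u := fun i => d * X₀ i) (v := Y₀)
    (s := ν₁) fun i j => by linear_combination (-ν₁) * hP i j + μ₁ * hQ i j
  have hμ₀ : μ₀ = 0 := eq_zero_of_mul_eq_pencil h₀ h₁ (u := fun i => d * X₁ i) (v := Y₁)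
    (s := -ν₀) fun i j => by linear_combination ν₀ * hP i j - μ₀ * hQ i j
  obtain ⟨i, hi⟩ := Function.ne_iff.mp (h₀.ne_zero 0)
  obtain ⟨j, hj⟩ := Function.ne_iff.mp (h₁.ne_zero 0)
  exact mul_ne_zero hi hj (by simpa [hμ₀, neg_eq_zero.mp hμ₁] using hP i j)

end Pencil

def HasTensorDecomp {l m n : ℕ} (A : Fin l → Fin m → Fin n → ℝ) (r : ℕ) : Prop :=
  ∃ (lam : Fin r → ℝ) (x : Fin r → Fin l → ℝ) (y : Fin r → Fin m → ℝ) (z : Fin r → Fin n → ℝ),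
    ∀ i j k, A i j k = ∑ α, lam α * (x α i * y α j * z α k)

namespace HasTensorDecomp

variable {l m n r s : ℕ} {A : Fin l → Fin m → Fin n → ℝ}

theorem of_sum (x : Fin r → Fin l → ℝ) (y : Fin r → Fin m → ℝ) (z : Fin r → Fin n → ℝ)
    (h : ∀ i j k, A i j k = ∑ α, x α i * y α j * z α k) : HasTensorDecomp A r :=
  ⟨1, x, y, z, by simpa using h⟩

theorem succ (h : HasTensorDecomp A r) : HasTensorDecomp A (r + 1) := by
  obtain ⟨lam, x, y, z, h⟩ := h
  refine ⟨Fin.snoc lam 0, Fin.snoc x 0, Fin.snoc y 0, Fin.snoc z 0, fun i j k => ?_⟩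
  simp [Fin.sum_univ_castSucc, h]

theorem mono (hrs : r ≤ s) (h : HasTensorDecomp A r) : HasTensorDecomp A s :=
  Nat.le_induction h (fun _ _ => succ) s hrs

theorem tensorRank_le (h : HasTensorDecomp A r) : tensorRank A ≤ r :=
  Nat.sInf_le h

theorem lt_tensorRank (hs : HasTensorDecomp A s) (hr : ¬ HasTensorDecomp A r) :
    r < tensorRank A := by
  by_contra! hle
  have hrank : HasTensorDecomp A (tensorRank A) :=
    Nat.sInf_mem (s := {r | HasTensorDecomp A r}) ⟨s, hs⟩
  exact hr (hrank.mono hle)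

end HasTensorDecomp

section ThreeTensor

variable {m : ℕ} {x y : Fin 3 → Fin m → ℝ} {A : Fin m → Fin m → Fin m → ℝ}

theorem hasTensorDecomp_three
    (hA : ∀ i j k, A i j k
      = x 0 i * x 1 j * y 2 k + x 0 i * y 1 j * x 2 k + y 0 i * x 1 j * x 2 k) :
    HasTensorDecomp A 3 :=
  .of_sum ![x 0, x 0, y 0] ![x 1, y 1, x 1] ![y 2, x 2, x 2] fun i j k => by
    simp [Fin.sum_univ_three, hA]

theorem hasTensorDecomp_two_of_not_linearIndependent
    (hA : ∀ i j k, A i j k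
      = x 0 i * x 1 j * y 2 k + x 0 i * y 1 j * x 2 k + y 0 i * x 1 j * x 2 k)
    (hdep : ∃ i, ¬ LinearIndependent ℝ ![x i, y i]) : HasTensorDecomp A 2 := by
  obtain ⟨i, hi⟩ := hdep
  obtain ⟨w, a, b, hx, hy⟩ := exists_eq_smul_of_not_linearIndependent_pair hi
  fin_cases i <;> simp only [Fin.zero_eta, Fin.mk_one, Fin.reduceFinMk] at hx hy <;>
  [refine .of_sum ![w, w] ![x 1, a • y 1] ![a • y 2 + b • x 2, x 2] fun i j k => ?_;
   refine .of_sum ![x 0, a • y 0] ![w, w] ![a • y 2 + b • x 2, x 2] fun i j k => ?_;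
   refine .of_sum ![x 0, a • y 0] ![b • x 1 + a • y 1, x 1] ![w, w] fun i j k => ?_] <;>
  · simp only [hA, hx, hy, Fin.sum_univ_two, Matrix.cons_val_zero, Matrix.cons_val_one,
      Pi.add_apply, Pi.smul_apply, smul_eq_mul]
    ring

theorem not_hasTensorDecomp_two
    (hA : ∀ i j k, A i j k
      = x 0 i * x 1 j * y 2 k + x 0 i * y 1 j * x 2 k + y 0 i * x 1 j * x 2 k)
    (hli : ∀ i, LinearIndependent ℝ ![x i, y i]) : ¬ HasTensorDecomp A 2 := by
  rintro ⟨lam, X, Y, Z, hrep⟩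
  obtain ⟨φ, hφy, hφx⟩ := (LinearIndependent.pair_symm_iff.mp (hli 2)).exists_dual_pair
  obtain ⟨ψ, hψx, hψy⟩ := (hli 2).exists_dual_pair
  have fiber (i j : Fin m) :
      (x 0 i * x 1 j) • y 2 + (x 0 i * y 1 j + y 0 i * x 1 j) • x 2
        = (lam 0 * (X 0 i * Y 0 j)) • Z 0 + (lam 1 * (X 1 i * Y 1 j)) • Z 1 := by
    ext k
    have := hA i j k
    rw [hrep, Fin.sum_univ_two] at this
    simp only [Pi.add_apply, Pi.smul_apply, smul_eq_mul]
    linear_combination -this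
  refine false_of_pencil_mem_span_two_rankOne (hli 0) (hli 1)
    (X₀ := X 0) (X₁ := X 1) (Y₀ := Y 0) (Y₁ := Y 1)
    (μ₀ := lam 0 * φ (Z 0)) (μ₁ := lam 1 * φ (Z 1)) (ν₀ := lam 0 * ψ (Z 0)) (ν₁ := lam 1 * ψ (Z 1))
    (fun i j => ?_) (fun i j => ?_)
  · have := congrArg φ (fiber i j)
    simp only [map_add, map_smul, hφx, hφy, smul_eq_mul] at this
    linear_combination this
  · have := congrArg ψ (fiber i j)
    simp only [map_add, map_smul, hψx, hψy, smul_eq_mul] at this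
    linear_combination this

end ThreeTensor

/-- for `A = x₁⊗x₂⊗y₃ + x₁⊗y₂⊗x₃ + y₁⊗x₂⊗x₃`, `rank(A) = 3` iff
`x_i, y_i` are linearly independent for `i = 1,2,3`; conversely if some pair
`x_i, y_i` is linearly dependent (and `A ≠ 0`) then `rank(A) ≤ 2`. -/
theorem stmt_15 (m : ℕ) (x y : Fin 3 → Fin m → ℝ)
    (A : Fin m → Fin m → Fin m → ℝ)
    (hA : ∀ i j k, A i j k
      = x 0 i * x 1 j * y 2 k + x 0 i * y 1 j * x 2 k + y 0 i * x 1 j * x 2 k) :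
    ((∀ i, LinearIndependent ℝ ![x i, y i]) → tensorRank A = 3) ∧
    ((∃ i, ¬ LinearIndependent ℝ ![x i, y i]) → A ≠ 0 → tensorRank A ≤ 2) ∧
    (tensorRank A = 3 ↔ ∀ i, LinearIndependent ℝ ![x i, y i]) := by
  have rank_eq_three (hli : ∀ i, LinearIndependent ℝ ![x i, y i]) : tensorRank A = 3 :=
    le_antisymm (hasTensorDecomp_three hA).tensorRank_le
      ((hasTensorDecomp_three hA).lt_tensorRank (not_hasTensorDecomp_two hA hli))
  have rank_le_two (hdep : ∃ i, ¬ LinearIndependent ℝ ![x i, y i]) : tensorRank A ≤ 2 :=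
    (hasTensorDecomp_two_of_not_linearIndependent hA hdep).tensorRank_le
  refine ⟨rank_eq_three, fun hdep _ => rank_le_two hdep, fun hrank => ?_, rank_eq_three⟩
  by_contra hdep
  have := rank_le_two (not_forall.mp hdep)
  omega
end

section
/- Let x_i, y_i ∈ ℝ^m (i = 1,2,3) be such that x_i and y_i are linearly independent for each i, and set A := x_1⊗x_2⊗y_3 + x_1⊗y_2⊗x_3 + y_1⊗x_2⊗x_3 ∈ ℝ^{m×m×m}. For each n ∈ ℕ let A_n := x_1⊗x_2⊗(y_3 − n x_3) + (x_1 + (1/n)y_1)⊗(x_2 + (1/n)y_2)⊗(n x_3). Then rank(A_n) ≤ 2 for all n, lim_{n→∞} A_n = A (entrywise, equivalently in the Frobenius norm), and A has no best rank-2 approximation: the infimum inf{‖A − B‖_F : B ∈ ℝ^{m×m×m}, rank(B) ≤ 2} equals 0 but is not attained by any tensor B of rank at most 2. -/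
/-- The Frobenius norm of a 3-tensor. -/
noncomputable def frobNorm {l m n : ℕ} (A : Fin l → Fin m → Fin n → ℝ) : ℝ :=
  Real.sqrt (∑ i, ∑ j, ∑ k, (A i j k) ^ 2)

/-! ### Auxiliary lemmas -/

lemma sum_sq_eq_zero' {m : ℕ} {v : Fin m → ℝ} (h : (∑ i, v i * v i) = 0) :
    ∀ i, v i = 0 := by
  intro i
  have := (Finset.sum_eq_zero_iff_of_nonneg (fun j _ => mul_self_nonneg (v j))).mp h i
    (Finset.mem_univ i)
  exact mul_self_eq_zero.mp this

lemma sum_lin2' {m : ℕ} (s t : ℝ) (f g : Fin m → ℝ) :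
    ∑ i, (s * f i + t * g i) = s * (∑ i, f i) + t * (∑ i, g i) := by
  rw [Finset.sum_add_distrib, Finset.mul_sum, Finset.mul_sum]

lemma sum_lin3' {m : ℕ} (s t u : ℝ) (f g h : Fin m → ℝ) :
    ∑ i, (s * f i + t * g i + u * h i)
      = s * (∑ i, f i) + t * (∑ i, g i) + u * (∑ i, h i) := by
  rw [Finset.sum_add_distrib, Finset.sum_add_distrib, Finset.mul_sum, Finset.mul_sum,
    Finset.mul_sum]

/-- For a linearly independent pair `x, y` in `ℝ^m` there is a covector `f`
with `f·x = 1` and `f·y = 0`. -/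
lemma exists_dual' {m : ℕ} {x y : Fin m → ℝ}
    (h : LinearIndependent ℝ ![x, y]) :
    ∃ f : Fin m → ℝ, (∑ i, f i * x i) = 1 ∧ (∑ i, f i * y i) = 0 := by
  have hpair := LinearIndependent.pair_iff.mp h
  set a : ℝ := ∑ i, x i * x i with ha
  set b : ℝ := ∑ i, x i * y i with hb
  set c : ℝ := ∑ i, y i * y i with hc
  set d : ℝ := a*c - b*b with hd
  have hvx : (∑ i, (c * x i - b * y i) * x i) = d := by
    calc ∑ i, (c * x i - b * y i) * x i
        = ∑ i, (c*(x i * x i) + (-b)*(x i * y i)) := Finset.sum_congr rfl (fun i _ => by ring)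
      _ = c*(∑ i, x i * x i) + (-b)*(∑ i, x i * y i) := sum_lin2' _ _ _ _
      _ = d := by rw [← ha, ← hb, hd]; ring
  have hvy : (∑ i, (c * x i - b * y i) * y i) = 0 := by
    calc ∑ i, (c * x i - b * y i) * y i
        = ∑ i, (c*(x i * y i) + (-b)*(y i * y i)) := Finset.sum_congr rfl (fun i _ => by ring)
      _ = c*(∑ i, x i * y i) + (-b)*(∑ i, y i * y i) := sum_lin2' _ _ _ _
      _ = 0 := by rw [← hb, ← hc]; ring
  have hdne : d ≠ 0 := by
    intro hd0
    have hvv : (∑ i, (c * x i - b * y i) * (c * x i - b * y i)) = c * d := by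
      calc ∑ i, (c * x i - b * y i) * (c * x i - b * y i)
          = ∑ i, ((c*c)*(x i * x i) + (-(2*c*b))*(x i * y i) + (b*b)*(y i * y i)) :=
            Finset.sum_congr rfl (fun i _ => by ring)
        _ = (c*c)*(∑ i, x i * x i) + (-(2*c*b))*(∑ i, x i * y i) + (b*b)*(∑ i, y i * y i) :=
            sum_lin3' _ _ _ _ _ _
        _ = c * d := by rw [← ha, ← hb, ← hc, hd]; ring
    rw [hd0, mul_zero] at hvv
    have hv0 := sum_sq_eq_zero' hvv
    have hcb : c = 0 ∧ -b = 0 := by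
      apply hpair c (-b)
      funext i
      have := hv0 i
      simp only [Pi.add_apply, Pi.smul_apply, smul_eq_mul, Pi.zero_apply]
      linarith
    have hy0 : y = 0 := by
      funext i
      have hc0 : (∑ i, y i * y i) = 0 := by rw [← hc, hcb.1]
      simpa using sum_sq_eq_zero' hc0 i
    have := h.ne_zero 1
    simp [hy0] at this
  refine ⟨fun i => d⁻¹ * (c * x i - b * y i), ?_, ?_⟩
  · calc ∑ i, d⁻¹ * (c * x i - b * y i) * x i
        = ∑ i, d⁻¹ * ((c * x i - b * y i) * x i) := Finset.sum_congr rfl (fun i _ => by ring)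
      _ = d⁻¹ * ∑ i, (c * x i - b * y i) * x i := (Finset.mul_sum _ _ _).symm
      _ = 1 := by rw [hvx]; exact inv_mul_cancel₀ hdne
  · calc ∑ i, d⁻¹ * (c * x i - b * y i) * y i
        = ∑ i, d⁻¹ * ((c * x i - b * y i) * y i) := Finset.sum_congr rfl (fun i _ => by ring)
      _ = d⁻¹ * ∑ i, (c * x i - b * y i) * y i := (Finset.mul_sum _ _ _).symm
      _ = 0 := by rw [hvy, mul_zero]

lemma li_swap' {m : ℕ} {x y : Fin m → ℝ} (h : LinearIndependent ℝ ![x, y]) :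
    LinearIndependent ℝ ![y, x] := by
  rw [LinearIndependent.pair_iff] at h ⊢
  intro s t hst
  have := h t s (by rw [add_comm]; exact hst)
  exact ⟨this.2, this.1⟩

lemma triple_factor' {m : ℕ} (φ ψ χ p q s : Fin m → ℝ) :
    ∑ i, ∑ j, ∑ k, φ i * ψ j * χ k * (p i * q j * s k)
      = (∑ i, φ i * p i) * (∑ j, ψ j * q j) * (∑ k, χ k * s k) := by
  symm
  rw [Finset.sum_mul_sum, Finset.sum_mul]
  refine Finset.sum_congr rfl (fun i _ => ?_)
  rw [Finset.sum_mul]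
  refine Finset.sum_congr rfl (fun j _ => ?_)
  rw [Finset.mul_sum]
  exact Finset.sum_congr rfl (fun k _ => by ring)

lemma contract_decomp' {m r : ℕ} (lam : Fin r → ℝ) (p q s : Fin r → Fin m → ℝ)
    (φ ψ χ : Fin m → ℝ) :
    ∑ i, ∑ j, ∑ k, φ i * ψ j * χ k * (∑ α, lam α * (p α i * q α j * s α k))
      = ∑ α, lam α * ((∑ i, φ i * p α i) * (∑ j, ψ j * q α j) * (∑ k, χ k * s α k)) := by
  have step1 : ∀ i j k : Fin m,
      φ i * ψ j * χ k * (∑ α, lam α * (p α i * q α j * s α k))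
        = ∑ α, lam α * (φ i * p α i * (ψ j * q α j) * (χ k * s α k)) := by
    intro i j k
    rw [Finset.mul_sum]
    exact Finset.sum_congr rfl (fun α _ => by ring)
  calc ∑ i, ∑ j, ∑ k, φ i * ψ j * χ k * (∑ α, lam α * (p α i * q α j * s α k))
      = ∑ i, ∑ j, ∑ k, ∑ α, lam α * (φ i * p α i * (ψ j * q α j) * (χ k * s α k)) := by
        refine Finset.sum_congr rfl (fun i _ => Finset.sum_congr rfl (fun j _ =>
          Finset.sum_congr rfl (fun k _ => step1 i j k)))
    _ = ∑ i, ∑ j, ∑ α, ∑ k, lam α * (φ i * p α i * (ψ j * q α j) * (χ k * s α k)) := by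
        exact Finset.sum_congr rfl (fun i _ => Finset.sum_congr rfl (fun j _ =>
          Finset.sum_comm ..))
    _ = ∑ i, ∑ α, ∑ j, ∑ k, lam α * (φ i * p α i * (ψ j * q α j) * (χ k * s α k)) := by
        exact Finset.sum_congr rfl (fun i _ => Finset.sum_comm ..)
    _ = ∑ α, ∑ i, ∑ j, ∑ k, lam α * (φ i * p α i * (ψ j * q α j) * (χ k * s α k)) := by
        exact Finset.sum_comm ..
    _ = ∑ α, lam α * ((∑ i, φ i * p α i) * (∑ j, ψ j * q α j) * (∑ k, χ k * s α k)) := by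
        refine Finset.sum_congr rfl (fun α _ => ?_)
        rw [← triple_factor' (fun i => φ i) (fun j => ψ j) (fun k => χ k)
          (fun i => p α i) (fun j => q α j) (fun k => s α k)]
        rw [Finset.mul_sum]
        refine Finset.sum_congr rfl (fun i _ => ?_)
        rw [Finset.mul_sum]
        refine Finset.sum_congr rfl (fun j _ => ?_)
        rw [Finset.mul_sum]
        exact Finset.sum_congr rfl (fun k _ => by ring)

/-- The `2×2×2` "W-tensor" algebra: no rank-≤2 decomposition can satisfy the
eight contraction equations. -/
lemma core12' (u1 u2 U1 U2 v1 v2 V1 V2 w1 w2 W1 W2 : ℝ)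
    (h1 : u1*v1*w1 + u2*v2*w2 = 0)
    (h2 : u1*v1*W1 + u2*v2*W2 = 1)
    (h3 : u1*V1*w1 + u2*V2*w2 = 1)
    (h4 : U1*v1*w1 + U2*v2*w2 = 1)
    (h5 : u1*V1*W1 + u2*V2*W2 = 0)
    (h6 : U1*v1*W1 + U2*v2*W2 = 0)
    (h7 : U1*V1*w1 + U2*V2*w2 = 0)
    (h8 : U1*V1*W1 + U2*V2*W2 = 0) : False := by
  set D : ℝ := (u1*U2 - u2*U1)*(v1*V2 - v2*V1) with hD
  have k1 : w1*w2*D = -1 := by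
    linear_combination (U1*V1*w1 + U2*V2*w2)*h1 - (U1*v1*w1 + U2*v2*w2)*h3 - h4
  have k2 : W1*W2*D = 0 := by
    linear_combination (U1*V1*W1 + U2*V2*W2)*h2 - (U1*v1*W1 + U2*v2*W2)*h5 + h8
  have k3 : (w1+W1)*(w2+W2)*D = -1 := by
    linear_combination (U1*V1*w1 + U2*V2*w2 + (U1*V1*W1 + U2*V2*W2))*h1
      + (U1*V1*w1 + U2*V2*w2 + (U1*V1*W1 + U2*V2*W2))*h2
      - (U1*v1*w1 + U2*v2*w2 + (U1*v1*W1 + U2*v2*W2))*h3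
      - (U1*v1*w1 + U2*v2*w2 + (U1*v1*W1 + U2*v2*W2))*h5
      - h4 - h6 + h7 + h8
  have hDne : D ≠ 0 := by intro h; rw [h] at k1; norm_num at k1
  have hw1 : w1 ≠ 0 := by intro h; rw [h] at k1; norm_num at k1
  have hw2 : w2 ≠ 0 := by intro h; rw [h] at k1; norm_num at k1
  have kW : W1*W2 = 0 := by
    have := mul_eq_zero.mp (by linarith [k2] : W1*W2*D = 0)
    tauto
  have kmix : (w1*W2 + w2*W1)*D = 0 := by linear_combination k3 - k1 - k2
  have kmix' : w1*W2 + w2*W1 = 0 := by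
    rcases mul_eq_zero.mp kmix with h | h
    · exact h
    · exact absurd h hDne
  have hW : W1 = 0 ∧ W2 = 0 := by
    rcases mul_eq_zero.mp kW with h | h
    · refine ⟨h, ?_⟩
      have : w1*W2 = 0 := by rw [h] at kmix'; linarith
      rcases mul_eq_zero.mp this with h' | h'
      · exact absurd h' hw1
      · exact h'
    · refine ⟨?_, h⟩
      have : w2*W1 = 0 := by rw [h] at kmix'; linarith
      rcases mul_eq_zero.mp this with h' | h'
      · exact absurd h' hw2
      · exact h'
  rw [hW.1, hW.2] at h2; norm_num at h2

lemma contract_A' {m : ℕ} (φ ψ χ x0 x1 x2 y0 y1 y2 : Fin m → ℝ) :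
    ∑ i, ∑ j, ∑ k, φ i * ψ j * χ k
        * (x0 i * x1 j * y2 k + x0 i * y1 j * x2 k + y0 i * x1 j * x2 k)
      = (∑ i, φ i * x0 i) * (∑ j, ψ j * x1 j) * (∑ k, χ k * y2 k)
        + (∑ i, φ i * x0 i) * (∑ j, ψ j * y1 j) * (∑ k, χ k * x2 k)
        + (∑ i, φ i * y0 i) * (∑ j, ψ j * x1 j) * (∑ k, χ k * x2 k) := by
  calc ∑ i, ∑ j, ∑ k, φ i * ψ j * χ k
        * (x0 i * x1 j * y2 k + x0 i * y1 j * x2 k + y0 i * x1 j * x2 k)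
      = ∑ i, ∑ j, ∑ k, (φ i * ψ j * χ k * (x0 i * x1 j * y2 k)
          + φ i * ψ j * χ k * (x0 i * y1 j * x2 k)
          + φ i * ψ j * χ k * (y0 i * x1 j * x2 k)) := by
        refine Finset.sum_congr rfl fun i _ => Finset.sum_congr rfl fun j _ =>
          Finset.sum_congr rfl fun k _ => by ring
    _ = (∑ i, ∑ j, ∑ k, φ i * ψ j * χ k * (x0 i * x1 j * y2 k))
        + (∑ i, ∑ j, ∑ k, φ i * ψ j * χ k * (x0 i * y1 j * x2 k))
        + (∑ i, ∑ j, ∑ k, φ i * ψ j * χ k * (y0 i * x1 j * x2 k)) := by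
        simp only [Finset.sum_add_distrib]
    _ = _ := by rw [triple_factor', triple_factor', triple_factor']

/-- Key lemma: the tensor `A` admits no decomposition into `r ≤ 2` rank-one terms. -/
lemma no_rank_two' {m : ℕ} (x y : Fin 3 → Fin m → ℝ)
    (hLI : ∀ i, LinearIndependent ℝ ![x i, y i])
    (A : Fin m → Fin m → Fin m → ℝ)
    (hA : ∀ i j k, A i j k
      = x 0 i * x 1 j * y 2 k + x 0 i * y 1 j * x 2 k + y 0 i * x 1 j * x 2 k)
    (r : ℕ) (hr : r ≤ 2) (lam : Fin r → ℝ) (p q s : Fin r → Fin m → ℝ)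
    (hdec : ∀ i j k, A i j k = ∑ α, lam α * (p α i * q α j * s α k)) : False := by
  obtain ⟨f0, hf0x, hf0y⟩ := exists_dual' (hLI 0)
  obtain ⟨g0, hg0y, hg0x⟩ := exists_dual' (li_swap' (hLI 0))
  obtain ⟨f1, hf1x, hf1y⟩ := exists_dual' (hLI 1)
  obtain ⟨g1, hg1y, hg1x⟩ := exists_dual' (li_swap' (hLI 1))
  obtain ⟨f2, hf2x, hf2y⟩ := exists_dual' (hLI 2)
  obtain ⟨g2, hg2y, hg2x⟩ := exists_dual' (li_swap' (hLI 2))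
  have key : ∀ φ ψ χ : Fin m → ℝ,
      ∑ α, lam α * ((∑ i, φ i * p α i) * (∑ j, ψ j * q α j) * (∑ k, χ k * s α k))
        = (∑ i, φ i * x 0 i) * (∑ j, ψ j * x 1 j) * (∑ k, χ k * y 2 k)
          + (∑ i, φ i * x 0 i) * (∑ j, ψ j * y 1 j) * (∑ k, χ k * x 2 k)
          + (∑ i, φ i * y 0 i) * (∑ j, ψ j * x 1 j) * (∑ k, χ k * x 2 k) := by
    intro φ ψ χ
    rw [← contract_decomp', ← contract_A']
    refine Finset.sum_congr rfl fun i _ => Finset.sum_congr rfl fun j _ =>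
      Finset.sum_congr rfl fun k _ => ?_
    rw [← hdec, hA]
  have e1 := key f0 f1 f2
  have e2 := key f0 f1 g2
  have e3 := key f0 g1 f2
  have e4 := key g0 f1 f2
  have e5 := key f0 g1 g2
  have e6 := key g0 f1 g2
  have e7 := key g0 g1 f2
  have e8 := key g0 g1 g2
  rw [hf0x, hf0y, hf1x, hf1y, hf2x, hf2y] at e1
  rw [hf0x, hf0y, hf1x, hf1y, hg2x, hg2y] at e2
  rw [hf0x, hf0y, hg1x, hg1y, hf2x, hf2y] at e3
  rw [hg0x, hg0y, hf1x, hf1y, hf2x, hf2y] at e4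
  rw [hf0x, hf0y, hg1x, hg1y, hg2x, hg2y] at e5
  rw [hg0x, hg0y, hf1x, hf1y, hg2x, hg2y] at e6
  rw [hg0x, hg0y, hg1x, hg1y, hf2x, hf2y] at e7
  rw [hg0x, hg0y, hg1x, hg1y, hg2x, hg2y] at e8
  norm_num at e1 e2 e3 e4 e5 e6 e7 e8
  interval_cases r
  · simp at e2
  · simp only [Fin.sum_univ_one] at e1 e2 e3 e4 e5 e6 e7 e8
    exact core12' (lam 0 * ∑ i, f0 i * p 0 i) 0 (lam 0 * ∑ i, g0 i * p 0 i) 0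
      (∑ j, f1 j * q 0 j) 0 (∑ j, g1 j * q 0 j) 0
      (∑ k, f2 k * s 0 k) 0 (∑ k, g2 k * s 0 k) 0
      (by linear_combination e1) (by linear_combination e2) (by linear_combination e3)
      (by linear_combination e4) (by linear_combination e5) (by linear_combination e6)
      (by linear_combination e7) (by linear_combination e8)
  · simp only [Fin.sum_univ_two] at e1 e2 e3 e4 e5 e6 e7 e8
    exact core12' (lam 0 * ∑ i, f0 i * p 0 i) (lam 1 * ∑ i, f0 i * p 1 i)
      (lam 0 * ∑ i, g0 i * p 0 i) (lam 1 * ∑ i, g0 i * p 1 i)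
      (∑ j, f1 j * q 0 j) (∑ j, f1 j * q 1 j) (∑ j, g1 j * q 0 j) (∑ j, g1 j * q 1 j)
      (∑ k, f2 k * s 0 k) (∑ k, f2 k * s 1 k) (∑ k, g2 k * s 0 k) (∑ k, g2 k * s 1 k)
      (by linear_combination e1) (by linear_combination e2) (by linear_combination e3)
      (by linear_combination e4) (by linear_combination e5) (by linear_combination e6)
      (by linear_combination e7) (by linear_combination e8)

/-- Every tensor admits some rank-one decomposition. -/
lemma exists_decomp' {l m n : ℕ} (A : Fin l → Fin m → Fin n → ℝ) :
    ∃ r : ℕ, ∃ (lam : Fin r → ℝ) (x : Fin r → Fin l → ℝ)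
      (y : Fin r → Fin m → ℝ) (z : Fin r → Fin n → ℝ),
      ∀ i j k, A i j k = ∑ α, lam α * (x α i * y α j * z α k) := by
  classical
  let e : Fin l × Fin m × Fin n ≃ Fin (l * (m * n)) :=
    (Equiv.prodCongr (Equiv.refl (Fin l)) finProdFinEquiv).trans finProdFinEquiv
  refine ⟨l * (m * n),
    fun β => A (e.symm β).1 (e.symm β).2.1 (e.symm β).2.2,
    fun β i => if i = (e.symm β).1 then 1 else 0,
    fun β j => if j = (e.symm β).2.1 then 1 else 0,
    fun β k => if k = (e.symm β).2.2 then 1 else 0, ?_⟩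
  intro i j k
  rw [← Equiv.sum_comp e]
  simp only [Equiv.symm_apply_apply]
  rw [Fintype.sum_prod_type]
  simp [Fintype.sum_prod_type, Finset.sum_ite_eq', eq_comm, mul_ite, ite_mul]

/-! ### The main theorem -/

/-- with `A = x₁⊗x₂⊗y₃ + x₁⊗y₂⊗x₃ + y₁⊗x₂⊗x₃` (pairs independent)
and `A_N = x₁⊗x₂⊗(y₃ − N x₃) + (x₁ + N⁻¹y₁)⊗(x₂ + N⁻¹y₂)⊗(N x₃)`, every `A_N`
has rank ≤ 2, `A_N → A` entrywise, and `A` has no best rank-2 approximation: the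
infimum of the Frobenius distances to tensors of rank ≤ 2 is 0 but not attained. -/
theorem stmt_16 (m : ℕ) (x y : Fin 3 → Fin m → ℝ)
    (hLI : ∀ i, LinearIndependent ℝ ![x i, y i])
    (A : Fin m → Fin m → Fin m → ℝ)
    (hA : ∀ i j k, A i j k
      = x 0 i * x 1 j * y 2 k + x 0 i * y 1 j * x 2 k + y 0 i * x 1 j * x 2 k)
    (B : ℕ → Fin m → Fin m → Fin m → ℝ)
    (hB : ∀ N : ℕ, 1 ≤ N → ∀ i j k, B N i j k
      = x 0 i * x 1 j * (y 2 k - (N : ℝ) * x 2 k)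
        + (x 0 i + (N : ℝ)⁻¹ * y 0 i) * (x 1 j + (N : ℝ)⁻¹ * y 1 j)
          * ((N : ℝ) * x 2 k)) :
    (∀ N : ℕ, 1 ≤ N → tensorRank (B N) ≤ 2) ∧
    (∀ i j k, Filter.Tendsto (fun N => B N i j k) Filter.atTop (nhds (A i j k))) ∧
    IsGLB {d : ℝ | ∃ C : Fin m → Fin m → Fin m → ℝ, tensorRank C ≤ 2 ∧
      d = frobNorm (fun i j k => A i j k - C i j k)} 0 ∧
    ¬ ∃ C : Fin m → Fin m → Fin m → ℝ, tensorRank C ≤ 2 ∧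
      frobNorm (fun i j k => A i j k - C i j k) = 0 := by
  -- entrywise description of B N for N ≥ 1
  have hBA : ∀ N : ℕ, 1 ≤ N → ∀ i j k,
      B N i j k = A i j k + (N : ℝ)⁻¹ * (y 0 i * y 1 j * x 2 k) := by
    intro N hN i j k
    have hNne : (N : ℝ) ≠ 0 := Nat.cast_ne_zero.mpr (by omega)
    rw [hB N hN i j k, hA]
    field_simp
    ring
  -- part 1: rank of B N is at most 2
  have part1 : ∀ N : ℕ, 1 ≤ N → tensorRank (B N) ≤ 2 := by
    intro N hN
    apply Nat.sInf_le
    refine ⟨![1, 1], ![x 0, fun i => x 0 i + (N : ℝ)⁻¹ * y 0 i],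
      ![x 1, fun j => x 1 j + (N : ℝ)⁻¹ * y 1 j],
      ![fun k => y 2 k - (N : ℝ) * x 2 k, fun k => (N : ℝ) * x 2 k], ?_⟩
    intro i j k
    rw [hB N hN i j k]
    simp [Fin.sum_univ_two]
  -- the "error" sum of squares
  set S : ℝ := ∑ i, ∑ j, ∑ k, (y 0 i * y 1 j * x 2 k) ^ 2 with hS
  have hS0 : 0 ≤ S := Finset.sum_nonneg fun i _ => Finset.sum_nonneg fun j _ =>
    Finset.sum_nonneg fun k _ => sq_nonneg _
  -- Frobenius norm of the difference A - B N
  have hfro : ∀ N : ℕ, 1 ≤ N →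
      frobNorm (fun i j k => A i j k - B N i j k) = (N : ℝ)⁻¹ * Real.sqrt S := by
    intro N hN
    have hNpos : (0 : ℝ) ≤ (N : ℝ)⁻¹ := by positivity
    unfold frobNorm
    have hsum : (∑ i, ∑ j, ∑ k, (A i j k - B N i j k) ^ 2)
        = ((N : ℝ)⁻¹) ^ 2 * S := by
      rw [hS, Finset.mul_sum]
      refine Finset.sum_congr rfl fun i _ => ?_
      rw [Finset.mul_sum]
      refine Finset.sum_congr rfl fun j _ => ?_
      rw [Finset.mul_sum]
      refine Finset.sum_congr rfl fun k _ => ?_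
      rw [hBA N hN i j k]
      ring
    rw [hsum, Real.sqrt_mul (sq_nonneg _), Real.sqrt_sq hNpos]
  -- part 2: entrywise convergence
  have part2 : ∀ i j k, Filter.Tendsto (fun N => B N i j k) Filter.atTop
      (nhds (A i j k)) := by
    intro i j k
    have hlim : Filter.Tendsto
        (fun N : ℕ => A i j k + (N : ℝ)⁻¹ * (y 0 i * y 1 j * x 2 k))
        Filter.atTop (nhds (A i j k)) := by
      have h0 : Filter.Tendsto (fun N : ℕ => (N : ℝ)⁻¹ * (y 0 i * y 1 j * x 2 k))
          Filter.atTop (nhds 0) := by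
        simpa using tendsto_inv_atTop_nhds_zero_nat.mul_const (y 0 i * y 1 j * x 2 k)
      simpa using (tendsto_const_nhds.add h0 :)
    refine hlim.congr' ?_
    filter_upwards [Filter.eventually_ge_atTop 1] with N hN
    exact (hBA N hN i j k).symm
  -- membership of zero-distance candidates in the approximation set
  set Dset : Set ℝ := {d : ℝ | ∃ C : Fin m → Fin m → Fin m → ℝ, tensorRank C ≤ 2 ∧
    d = frobNorm (fun i j k => A i j k - C i j k)} with hDset
  -- part 4: no exact rank-≤2 representation
  have part4 : ¬ ∃ C : Fin m → Fin m → Fin m → ℝ, tensorRank C ≤ 2 ∧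
      frobNorm (fun i j k => A i j k - C i j k) = 0 := by
    rintro ⟨C, hC2, hC0⟩
    -- frobNorm zero forces A = C pointwise
    have hsum0 : (∑ i, ∑ j, ∑ k, (A i j k - C i j k) ^ 2) = 0 := by
      have hnn : 0 ≤ ∑ i, ∑ j, ∑ k, (A i j k - C i j k) ^ 2 :=
        Finset.sum_nonneg fun i _ => Finset.sum_nonneg fun j _ =>
          Finset.sum_nonneg fun k _ => sq_nonneg _
      have := hC0
      unfold frobNorm at this
      exact (Real.sqrt_eq_zero hnn).mp this
    have hAC : ∀ i j k, A i j k = C i j k := by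
      intro i j k
      have h1 := (Finset.sum_eq_zero_iff_of_nonneg fun i _ =>
        Finset.sum_nonneg fun j _ => Finset.sum_nonneg fun k _ => sq_nonneg
          (A i j k - C i j k)).mp hsum0 i (Finset.mem_univ i)
      have h2 := (Finset.sum_eq_zero_iff_of_nonneg fun j _ =>
        Finset.sum_nonneg fun k _ => sq_nonneg (A i j k - C i j k)).mp h1 j
        (Finset.mem_univ j)
      have h3 := (Finset.sum_eq_zero_iff_of_nonneg fun k _ =>
        sq_nonneg (A i j k - C i j k)).mp h2 k (Finset.mem_univ k)
      have := pow_eq_zero_iff (n := 2) (by norm_num) |>.mp h3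
      linarith [this]
    -- extract a minimal decomposition of C
    have hne : {r : ℕ | ∃ (lam : Fin r → ℝ) (xx : Fin r → Fin m → ℝ)
        (yy : Fin r → Fin m → ℝ) (zz : Fin r → Fin m → ℝ),
        ∀ i j k, C i j k = ∑ α, lam α * (xx α i * yy α j * zz α k)}.Nonempty := by
      obtain ⟨r, lam, xx, yy, zz, hd⟩ := exists_decomp' C
      exact ⟨r, lam, xx, yy, zz, hd⟩
    have hmem := Nat.sInf_mem hne
    obtain ⟨lam, xx, yy, zz, hd⟩ := hmem
    exact no_rank_two' x y hLI A hA (tensorRank C) hC2 lam xx yy zz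
      (fun i j k => by rw [hAC i j k]; exact hd i j k)
  -- part 3: 0 is the greatest lower bound
  have part3 : IsGLB Dset 0 := by
    constructor
    · rintro d ⟨C, _, rfl⟩
      exact Real.sqrt_nonneg _
    · intro b hb
      by_contra hb0
      push_neg at hb0
      obtain ⟨N0, hN0⟩ := exists_nat_gt (Real.sqrt S / b)
      set N : ℕ := max N0 1 with hNdef
      have hN1 : 1 ≤ N := le_max_right _ _
      have hNR : (0 : ℝ) < (N : ℝ) := by
        have : (1 : ℕ) ≤ N := hN1
        exact_mod_cast Nat.lt_of_lt_of_le Nat.zero_lt_one this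
      have hNb : Real.sqrt S / b < (N : ℝ) := by
        calc Real.sqrt S / b < (N0 : ℝ) := hN0
          _ ≤ (N : ℝ) := by exact_mod_cast le_max_left _ _
      have hlt : (N : ℝ)⁻¹ * Real.sqrt S < b := by
        have h1 : Real.sqrt S < (N : ℝ) * b := by
          rw [div_lt_iff₀ hb0] at hNb
          linarith
        rw [inv_mul_lt_iff₀ hNR]
        linarith
      have hdmem : frobNorm (fun i j k => A i j k - B N i j k) ∈ Dset :=
        ⟨B N, part1 N hN1, rfl⟩
      have := hb hdmem
      rw [hfro N hN1] at this
      linarith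
  exact ⟨part1, part2, part3, part4⟩
end

section
/- Let e₁ = (1,0)^T, e₂ = (0,1)^T ∈ ℚ², and let A := 2 e₁⊗e₁⊗e₁ − 4 e₂⊗e₂⊗e₁ + 4 e₂⊗e₁⊗e₂ − 4 e₁⊗e₂⊗e₂ ∈ ℚ^{2×2×2}. Then the rank of A over ℝ is at most 2 (indeed A = z̄₁⊗z₂⊗z̄₃ + z₁⊗z̄₂⊗z₃ where z = e₁ + √2 e₂ and z̄ = e₁ − √2 e₂), while the rank of A over ℚ is strictly greater than 2: there are no rational vectors u_i, v_i ∈ ℚ² (i = 1,2,3) with A = u₁⊗u₂⊗u₃ + v₁⊗v₂⊗v₃. In particular, the rank over ℝ of a tensor with rational entries can be strictly less than its rank over ℚ. -/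
/-- The rank over a field `F` of a 3-tensor `A ∈ F^{2×2×2}`: the least `r` such
that `A` is a sum of `r` outer products `x_α ⊗ y_α ⊗ z_α`. -/
noncomputable def tRank (F : Type*) [Field F] (A : Fin 2 → Fin 2 → Fin 2 → F) : ℕ :=
  sInf {r : ℕ | ∃ x y z : Fin r → Fin 2 → F,
    ∀ i j k, A i j k = ∑ α, x α i * y α j * z α k}

/-- The tensor `A = 2 e₁⊗e₁⊗e₁ − 4 e₂⊗e₂⊗e₁ + 4 e₂⊗e₁⊗e₂ − 4 e₁⊗e₂⊗e₂ ∈ ℚ^{2×2×2}`. -/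
noncomputable def Aten : Fin 2 → Fin 2 → Fin 2 → ℚ := fun i j k =>
  2 * ((![1, 0] : Fin 2 → ℚ) i * ![1, 0] j * ![1, 0] k)
    - 4 * ((![0, 1] : Fin 2 → ℚ) i * ![0, 1] j * ![1, 0] k)
    + 4 * ((![0, 1] : Fin 2 → ℚ) i * ![1, 0] j * ![0, 1] k)
    - 4 * ((![1, 0] : Fin 2 → ℚ) i * ![0, 1] j * ![0, 1] k)

/-!
Over `ℝ`, `A = z̄⊗z⊗z̄ + z⊗z̄⊗z` with `z = e₁ + √2 e₂`, `z̄ = e₁ − √2 e₂`.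
Over `ℚ`, suppose `A = u₁⊗u₂⊗u₃ + v₁⊗v₂⊗v₃`. The combination `v₃₁ A(·,·,0) − v₃₀ A(·,·,1)` of
the two slices kills the second term, so it is a multiple of `u₁ u₂ᵀ` and its determinant
`16 v₃₀² − 8 v₃₁²` vanishes. Since `2` is not a rational square, `v₃₀ = 0`; symmetrically
`u₃₀ = 0`, contradicting `A(0,0,0) = 2`. Decompositions with fewer terms pad with zeros, so the
rational rank exceeds `2`.
-/

def IsSumOfOuterProducts (F : Type*) [Field F] (A : Fin 2 → Fin 2 → Fin 2 → F) (r : ℕ) : Prop :=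
  ∃ x y z : Fin r → Fin 2 → F, ∀ i j k, A i j k = ∑ α, x α i * y α j * z α k

section Rank

variable {F : Type*} [Field F] {A : Fin 2 → Fin 2 → Fin 2 → F}

lemma tRank_le {r : ℕ} (h : IsSumOfOuterProducts F A r) : tRank F A ≤ r :=
  Nat.sInf_le h

lemma IsSumOfOuterProducts.succ {r : ℕ} (h : IsSumOfOuterProducts F A r) :
    IsSumOfOuterProducts F A (r + 1) := by
  obtain ⟨x, y, z, h⟩ := h
  exact ⟨Fin.cons 0 x, Fin.cons 0 y, Fin.cons 0 z, fun i j k => by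
    simp [Fin.sum_univ_succ, h i j k]⟩

lemma IsSumOfOuterProducts.mono {r s : ℕ} (h : IsSumOfOuterProducts F A r) (hrs : r ≤ s) :
    IsSumOfOuterProducts F A s := by
  induction s, hrs using Nat.le_induction with
  | base => exact h
  | succ s _ ih => exact ih.succ

/-- `A = ∑_{i,j} e_i ⊗ e_j ⊗ A(i, j, ·)`. -/
lemma isSumOfOuterProducts_four (A : Fin 2 → Fin 2 → Fin 2 → F) :
    IsSumOfOuterProducts F A 4 := by
  refine ⟨![Pi.single 0 1, Pi.single 0 1, Pi.single 1 1, Pi.single 1 1],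
    ![Pi.single 0 1, Pi.single 1 1, Pi.single 0 1, Pi.single 1 1],
    ![A 0 0, A 0 1, A 1 0, A 1 1], fun i j k => ?_⟩
  fin_cases i <;> fin_cases j <;> simp [Fin.sum_univ_four]

lemma lt_tRank_iff {n : ℕ} : n < tRank F A ↔ ¬ IsSumOfOuterProducts F A n := by
  refine ⟨fun hn h => (tRank_le h).not_gt hn, fun h => ?_⟩
  by_contra! hle
  have hrank : IsSumOfOuterProducts F A (tRank F A) :=
    Nat.sInf_mem (s := {r | IsSumOfOuterProducts F A r}) ⟨4, isSumOfOuterProducts_four A⟩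
  exact h (hrank.mono hle)

end Rank

lemma eq_zero_of_sq_eq_mul_sq {K : Type*} [Field K] {c p q : K} (hc : ¬ IsSquare c)
    (h : p ^ 2 = c * q ^ 2) : q = 0 := by
  by_contra hq
  exact hc ⟨p / q, by field_simp; linear_combination -h⟩

lemma Aten_sq_eq_two_mul_sq {u₁ u₂ u₃ v₁ v₂ v₃ : Fin 2 → ℚ}
    (h : ∀ i j k, Aten i j k = u₁ i * u₂ j * u₃ k + v₁ i * v₂ j * v₃ k) :
    v₃ 1 ^ 2 = 2 * v₃ 0 ^ 2 := by
  set D := u₃ 0 * v₃ 1 - u₃ 1 * v₃ 0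
  have slice (i j : Fin 2) : v₃ 1 * Aten i j 0 - v₃ 0 * Aten i j 1 = D * u₁ i * u₂ j := by
    rw [h, h]; ring
  have s00 : v₃ 1 * 2 = D * u₁ 0 * u₂ 0 := by simpa [Aten] using slice 0 0
  have s01 : v₃ 0 * 4 = D * u₁ 0 * u₂ 1 := by simpa [Aten] using slice 0 1
  have s10 : -(v₃ 0 * 4) = D * u₁ 1 * u₂ 0 := by simpa [Aten] using slice 1 0
  have s11 : -(v₃ 1 * 4) = D * u₁ 1 * u₂ 1 := by simpa [Aten] using slice 1 1
  have det : v₃ 1 * 2 * -(v₃ 1 * 4) - v₃ 0 * 4 * -(v₃ 0 * 4) = 0 := by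
    rw [s11, s10, s00, s01]; ring
  linear_combination -det / 8

lemma not_exists_Aten_eq_add_outer : ¬ ∃ u₁ u₂ u₃ v₁ v₂ v₃ : Fin 2 → ℚ, ∀ i j k,
    Aten i j k = u₁ i * u₂ j * u₃ k + v₁ i * v₂ j * v₃ k := by
  rintro ⟨u₁, u₂, u₃, v₁, v₂, v₃, h⟩
  have h2 : ¬ IsSquare (2 : ℚ) := by norm_num
  have hv := eq_zero_of_sq_eq_mul_sq h2 (Aten_sq_eq_two_mul_sq h)
  have hu := eq_zero_of_sq_eq_mul_sq h2
    (Aten_sq_eq_two_mul_sq fun i j k => (h i j k).trans (add_comm _ _))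
  have h000 := h 0 0 0
  simp [Aten, hu, hv] at h000

lemma Aten_isSumOfOuterProducts_real :
    IsSumOfOuterProducts ℝ (fun i j k => ((Aten i j k : ℚ) : ℝ)) 2 := by
  refine ⟨![![1, -√2], ![1, √2]], ![![1, √2], ![1, -√2]], ![![1, -√2], ![1, √2]], ?_⟩
  intro i j k
  fin_cases i <;> fin_cases j <;> fin_cases k <;> norm_num [Aten, Fin.sum_univ_two]

/-- the rank of `A` over `ℝ` is at most 2, while its rank over `ℚ`
is strictly greater than 2; in particular no rational vectors give
`A = u₁⊗u₂⊗u₃ + v₁⊗v₂⊗v₃`. -/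
theorem stmt_18 :
    tRank ℝ (fun i j k => ((Aten i j k : ℚ) : ℝ)) ≤ 2 ∧
    2 < tRank ℚ Aten ∧
    ¬ ∃ u₁ u₂ u₃ v₁ v₂ v₃ : Fin 2 → ℚ, ∀ i j k,
      Aten i j k = u₁ i * u₂ j * u₃ k + v₁ i * v₂ j * v₃ k := by
  refine ⟨tRank_le Aten_isSumOfOuterProducts_real, lt_tRank_iff.mpr ?_,
    not_exists_Aten_eq_add_outer⟩
  rintro ⟨x, y, z, h⟩
  exact not_exists_Aten_eq_add_outer
    ⟨x 0, y 0, z 0, x 1, y 1, z 1, by simpa [Fin.sum_univ_two] using h⟩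
end
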